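/- arXiv:2604.23895 — 6 statements merged into one kernel-verified Lean document; each statement's English description precedes it below -/
import Mathlib

section
/- Let n ≥ 1 and T > 0. Suppose Σ, Λ : [0,T] → ℝ^{n×n} are differentiable with Σ_t and Λ_t symmetric for every t, and define A_t := (1/2)(Σ_t Λ_t + Λ_t Σ_t) − (1/n)·tr(Λ_t Σ_t)·I. If Σ'(t) = A_t Σ_t + Σ_t A_t and Λ'(t) = −Λ_t A_t − A_t Λ_t for all t ∈ [0,T], then A_t is isospectral: for every positive integer m, the function t ↦ tr(A_t^m) is constant on [0,T] (equivalently, the eigenvalues of A_t do not depend on t). -/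
/-!
Write `B_t := (Σ_t Λ_t - Λ_t Σ_t) / 2`. The two stationarity equations give
`(ΣΛ)' = [A, ΣΛ]` and `(ΛΣ)' = -[A, ΛΣ]`, so `tr(ΛΣ)` is conserved and the gain obeys the
Lax equation `A' = [A, B]`. Then `(A^m)' = [A^m, B]` has trace zero, so `tr(A^m)` is constant.
-/

open Set Matrix

theorem eq_of_hasDerivWithinAt_zero_Icc {E : Type*} [NormedAddCommGroup E] [NormedSpace ℝ E]
    {f : ℝ → E} {a b : ℝ} (hf : ∀ x ∈ Icc a b, HasDerivWithinAt f 0 (Icc a b) x) :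
    ∀ x ∈ Icc a b, f x = f a :=
  constant_of_has_deriv_right_zero (fun x hx => (hf x hx).continuousWithinAt) fun x hx =>
    (hf x (Ico_subset_Icc_self hx)).mono_of_mem_nhdsWithin (Icc_mem_nhdsGE_of_mem hx)

namespace Matrix

variable {𝕜 : Type*} [NontriviallyNormedField 𝕜] {l m n : Type*}

def HasEntrywiseDerivWithinAt (M : 𝕜 → Matrix m n 𝕜) (M' : Matrix m n 𝕜) (s : Set 𝕜) (t : 𝕜) :
    Prop :=
  ∀ i j, HasDerivWithinAt (fun τ => M τ i j) (M' i j) s t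

theorem trace_commutator_eq_zero [Fintype n] (X Y : Matrix n n 𝕜) : (X * Y - Y * X).trace = 0 := by
  rw [trace_sub, trace_mul_comm, sub_self]

theorem hasEntrywiseDerivWithinAt_smul_const {s : Set 𝕜} {t : 𝕜} {c : 𝕜 → 𝕜} {c' : 𝕜}
    (hc : HasDerivWithinAt c c' s t) (M : Matrix m n 𝕜) :
    HasEntrywiseDerivWithinAt (fun τ => c τ • M) (c' • M) s t := fun i j =>
  hc.mul_const (M i j)

namespace HasEntrywiseDerivWithinAt

variable {s : Set 𝕜} {t : 𝕜} {M N : 𝕜 → Matrix m n 𝕜} {M' N' : Matrix m n 𝕜}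

theorem congr_of_mem (h : HasEntrywiseDerivWithinAt M M' s t) (hs : ∀ τ ∈ s, N τ = M τ)
    (ht : t ∈ s) : HasEntrywiseDerivWithinAt N M' s t := fun i j =>
  (h i j).congr_of_mem (fun τ hτ => by rw [hs τ hτ]) ht

theorem add (hM : HasEntrywiseDerivWithinAt M M' s t) (hN : HasEntrywiseDerivWithinAt N N' s t) :
    HasEntrywiseDerivWithinAt (fun τ => M τ + N τ) (M' + N') s t := fun i j =>
  (hM i j).add (hN i j)

theorem sub (hM : HasEntrywiseDerivWithinAt M M' s t) (hN : HasEntrywiseDerivWithinAt N N' s t) :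
    HasEntrywiseDerivWithinAt (fun τ => M τ - N τ) (M' - N') s t := fun i j =>
  (hM i j).sub (hN i j)

theorem const_smul (c : 𝕜) (hM : HasEntrywiseDerivWithinAt M M' s t) :
    HasEntrywiseDerivWithinAt (fun τ => c • M τ) (c • M') s t := fun i j =>
  (hM i j).const_mul c

theorem mul [Fintype n] {M : 𝕜 → Matrix l n 𝕜} {M' : Matrix l n 𝕜} {N : 𝕜 → Matrix n m 𝕜}
    {N' : Matrix n m 𝕜} (hM : HasEntrywiseDerivWithinAt M M' s t)
    (hN : HasEntrywiseDerivWithinAt N N' s t) :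
    HasEntrywiseDerivWithinAt (fun τ => M τ * N τ) (M' * N t + M t * N') s t := fun i j => by
  simpa only [mul_apply, add_apply, ← Finset.sum_add_distrib] using
    HasDerivWithinAt.fun_sum fun k _ => (hM i k).fun_mul (hN k j)

theorem trace [Fintype n] {M : 𝕜 → Matrix n n 𝕜} {M' : Matrix n n 𝕜}
    (hM : HasEntrywiseDerivWithinAt M M' s t) :
    HasDerivWithinAt (fun τ => (M τ).trace) M'.trace s t :=
  HasDerivWithinAt.fun_sum fun k _ => hM k k

theorem pow_of_lax [Fintype n] [DecidableEq n] {M : 𝕜 → Matrix n n 𝕜} {B : Matrix n n 𝕜}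
    (hM : HasEntrywiseDerivWithinAt M (M t * B - B * M t) s t) (k : ℕ) :
    HasEntrywiseDerivWithinAt (fun τ => M τ ^ k) (M t ^ k * B - B * M t ^ k) s t := by
  induction k with
  | zero =>
    simp only [pow_zero, mul_one, one_mul, sub_self]
    exact fun i j => hasDerivWithinAt_const t s _
  | succ k ih =>
    have h := ih.mul hM
    simp only [← pow_succ] at h
    convert h using 1
    simp only [pow_succ, mul_sub, sub_mul, mul_assoc]
    abel

theorem trace_pow_of_lax [Fintype n] [DecidableEq n] {M : 𝕜 → Matrix n n 𝕜} {B : Matrix n n 𝕜}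
    (hM : HasEntrywiseDerivWithinAt M (M t * B - B * M t) s t) (k : ℕ) :
    HasDerivWithinAt (fun τ => (M τ ^ k).trace) 0 s t := by
  simpa only [trace_commutator_eq_zero] using (hM.pow_of_lax k).trace

end HasEntrywiseDerivWithinAt

end Matrix

section Shear

variable {𝕜 : Type*} [NontriviallyNormedField 𝕜] {n : ℕ}

def shearGain (S L : Matrix (Fin n) (Fin n) 𝕜) : Matrix (Fin n) (Fin n) 𝕜 :=
  (1 / 2 : 𝕜) • (S * L + L * S) - ((L * S).trace / (n : 𝕜)) • 1

theorem hasEntrywiseDerivWithinAt_shearGain_lax {S L A : 𝕜 → Matrix (Fin n) (Fin n) 𝕜}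
    {s : Set 𝕜} {t : 𝕜} (hA : ∀ τ ∈ s, A τ = shearGain (S τ) (L τ)) (ht : t ∈ s)
    (hS : HasEntrywiseDerivWithinAt S (A t * S t + S t * A t) s t)
    (hL : HasEntrywiseDerivWithinAt L (-(L t * A t) - A t * L t) s t) :
    HasEntrywiseDerivWithinAt A
      (A t * ((1 / 2 : 𝕜) • (S t * L t - L t * S t))
        - (1 / 2 : 𝕜) • (S t * L t - L t * S t) * A t) s t := by
  have hSL : HasEntrywiseDerivWithinAt (fun τ => S τ * L τ)
      (A t * (S t * L t) - S t * L t * A t) s t := by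
    convert hS.mul hL using 1
    noncomm_ring
  have hLS : HasEntrywiseDerivWithinAt (fun τ => L τ * S τ)
      (L t * S t * A t - A t * (L t * S t)) s t := by
    convert hL.mul hS using 1
    noncomm_ring
  have htr : HasDerivWithinAt (fun τ => (L τ * S τ).trace) 0 s t := by
    simpa only [trace_commutator_eq_zero] using hLS.trace
  have hgain := ((hSL.add hLS).const_smul (1 / 2 : 𝕜)).sub
    (hasEntrywiseDerivWithinAt_smul_const (htr.div_const (n : 𝕜)) 1)
  convert hgain.congr_of_mem hA ht using 1
  simp only [zero_div, zero_smul, sub_zero, smul_sub, smul_add, mul_smul_comm, smul_mul_assoc,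
    mul_sub, sub_mul, mul_assoc]
  abel

end Shear

theorem shear_optimal_gain_isospectral_general
    {n : ℕ} (T : ℝ)
    (S L A : ℝ → Matrix (Fin n) (Fin n) ℝ)
    (hA : ∀ t ∈ Set.Icc (0:ℝ) T,
      A t = (1/2 : ℝ) • (S t * L t + L t * S t)
        - (((L t * S t).trace / (n : ℝ)) • (1 : Matrix (Fin n) (Fin n) ℝ)))
    (hS' : ∀ t ∈ Set.Icc (0:ℝ) T, ∀ i j,
      HasDerivWithinAt (fun τ => S τ i j)
        ((A t * S t + S t * A t) i j) (Set.Icc (0:ℝ) T) t)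
    (hL' : ∀ t ∈ Set.Icc (0:ℝ) T, ∀ i j,
      HasDerivWithinAt (fun τ => L τ i j)
        ((-(L t * A t) - A t * L t) i j) (Set.Icc (0:ℝ) T) t) :
    ∀ m : ℕ, 0 < m → ∀ t ∈ Set.Icc (0:ℝ) T,
      ((A t) ^ m).trace = ((A 0) ^ m).trace := by
  intro m _ t ht
  refine eq_of_hasDerivWithinAt_zero_Icc (f := fun τ => (A τ ^ m).trace) (fun u hu => ?_) t ht
  exact (hasEntrywiseDerivWithinAt_shearGain_lax hA hu (hS' u hu) (hL' u hu)).trace_pow_of_lax m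

/-- Proposition 1, isospectrality of the shear-minimizing gain.
Under the Euler–Lagrange/Pontryagin stationarity conditions for minimizing
`∫₀ᵀ tr(A_t²) dt` subject to the Lyapunov equation, the gain
`A_t = (1/2)(Σ_tΛ_t + Λ_tΣ_t) − (1/n)·tr(Λ_tΣ_t)·I` is isospectral:
`t ↦ tr(A_t^m)` is constant on `[0,T]` for every `m ≥ 1`. -/
theorem shear_optimal_gain_isospectral
    {n : ℕ} (hn : 1 ≤ n) (T : ℝ) (hT : 0 < T)
    (S L A : ℝ → Matrix (Fin n) (Fin n) ℝ)
    (hSsym : ∀ t ∈ Set.Icc (0:ℝ) T, (S t).IsSymm)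
    (hLsym : ∀ t ∈ Set.Icc (0:ℝ) T, (L t).IsSymm)
    (hA : ∀ t ∈ Set.Icc (0:ℝ) T,
      A t = (1/2 : ℝ) • (S t * L t + L t * S t)
        - (((L t * S t).trace / (n : ℝ)) • (1 : Matrix (Fin n) (Fin n) ℝ)))
    (hS' : ∀ t ∈ Set.Icc (0:ℝ) T, ∀ i j,
      HasDerivWithinAt (fun τ => S τ i j)
        ((A t * S t + S t * A t) i j) (Set.Icc (0:ℝ) T) t)
    (hL' : ∀ t ∈ Set.Icc (0:ℝ) T, ∀ i j,
      HasDerivWithinAt (fun τ => L τ i j)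
        ((-(L t * A t) - A t * L t) i j) (Set.Icc (0:ℝ) T) t) :
    ∀ m : ℕ, 0 < m → ∀ t ∈ Set.Icc (0:ℝ) T,
      ((A t) ^ m).trace = ((A 0) ^ m).trace :=
  shear_optimal_gain_isospectral_general T S L A hA hS' hL'
end

section
/- Let n ≥ 1, T > 0, and let f : ℝ → ℝ be twice continuously differentiable with f' strictly monotone (hence injective). Suppose Σ, Λ : [0,T] → ℝ^{n×n} are differentiable with Σ_t and Λ_t symmetric, A : [0,T] → ℝ^{n×n} is differentiable with A_t symmetric and traceless, and for all t ∈ [0,T]: Σ'(t) = A_t Σ_t + Σ_t A_t, Λ'(t) = −Λ_t A_t − A_t Λ_t, and f'(A_t) = Σ_t Λ_t + Λ_t Σ_t − (2/n)·tr(Λ_t Σ_t)·I, where f'(A_t) is defined by the functional calculus for the symmetric matrix A_t (apply f' to the eigenvalues in a spectral decomposition). Then A_t is isospectral: for every positive integer m, t ↦ tr(A_t^m) is constant on [0,T]. -/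
/-!
The stationarity condition says that `N := f'(A) = SL + LS - (2/n) tr(LS) I`. Along the Lyapunov
flow `tr(LS)` is conserved and `N' = [A, [S, L]]`; since `N = f'(A)` commutes with `A`, every
`tr(N^k)' = k tr(N^(k-1) [A, [S, L]])` vanishes. So the power sums of the eigenvalues `f'(aᵢ)` of
`N` are conserved, hence (Newton's identities) so is their multiset, and injectivity of `f'`
transfers this to the eigenvalues `aᵢ` of `A`.
-/

open MeasureTheory Matrix

/-- Functional calculus for a real symmetric matrix: apply `g : ℝ → ℝ` to the
eigenvalues in a spectral decomposition `A = W diag(a₁,…,aₙ) Wᵀ`. -/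
noncomputable def matFun {n : ℕ} (g : ℝ → ℝ) {A : Matrix (Fin n) (Fin n) ℝ}
    (hA : A.IsHermitian) : Matrix (Fin n) (Fin n) ℝ :=
  (hA.eigenvectorUnitary : Matrix (Fin n) (Fin n) ℝ) *
    Matrix.diagonal (g ∘ hA.eigenvalues) *
    star (hA.eigenvectorUnitary : Matrix (Fin n) (Fin n) ℝ)

open Finset

section PowerSums

variable {K ι : Type*} [Field K] [CharZero K] [Fintype ι] {b c : ι → K}

theorem esymm_map_univ_eq_of_sum_pow_eq (h : ∀ k, 0 < k → ∑ i, b i ^ k = ∑ i, c i ^ k) (k : ℕ) :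
    (univ.val.map b).esymm k = (univ.val.map c).esymm k := by
  simp only [← MvPolynomial.aeval_esymm_eq_multiset_esymm ι K]
  induction k using Nat.strong_induction_on with
  | _ k ih =>
    rcases Nat.eq_zero_or_pos k with rfl | hk
    · simp [MvPolynomial.esymm_zero]
    -- Newton's identities express `k * e_k` through the `e_j` with `j < k` and power sums.
    have newton (x : ι → K) :=
      congrArg (MvPolynomial.aeval (R := K) x) (MvPolynomial.mul_esymm_eq_sum ι K k)
    simp only [map_mul, map_sum, map_pow, map_neg, map_one, map_natCast] at newton
    refine mul_left_cancel₀ (Nat.cast_ne_zero.mpr hk.ne' : (k : K) ≠ 0) ?_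
    rw [newton b, newton c]
    refine congrArg _ (sum_congr rfl fun a ha => ?_)
    rw [mem_filter, HasAntidiagonal.mem_antidiagonal] at ha
    simp only [MvPolynomial.psum, map_sum, map_pow, MvPolynomial.aeval_X]
    rw [ih a.1 ha.2, h a.2 (by omega)]

theorem map_univ_eq_of_sum_pow_eq (h : ∀ k, 0 < k → ∑ i, b i ^ k = ∑ i, c i ^ k) :
    univ.val.map b = univ.val.map c := by
  have hprod : ((univ.val.map b).map fun t => Polynomial.X - Polynomial.C t).prod
      = ((univ.val.map c).map fun t => Polynomial.X - Polynomial.C t).prod := by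
    simp only [Multiset.prod_X_sub_X_eq_sum_esymm, esymm_map_univ_eq_of_sum_pow_eq h,
      Multiset.card_map]
  simpa only [Polynomial.roots_multiset_prod_X_sub_C] using congrArg Polynomial.roots hprod

end PowerSums

section Spectral

variable {𝕜 ι : Type*} [RCLike 𝕜] [Fintype ι] [DecidableEq ι] {A B : Matrix ι ι 𝕜}

theorem Matrix.IsHermitian.trace_cfc (hA : A.IsHermitian) (g : ℝ → ℝ) :
    (cfc g A).trace = ∑ i, (g (hA.eigenvalues i) : 𝕜) := by
  rw [hA.cfc_eq, IsHermitian.cfc, Unitary.conjStarAlgAut_apply, trace_mul_cycle,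
    Unitary.coe_star_mul_self, one_mul, trace_diagonal]
  rfl

theorem Matrix.IsHermitian.trace_cfc_pow (hA : A.IsHermitian) (g : ℝ → ℝ) (k : ℕ) :
    (cfc g A ^ k).trace = ∑ i, (g (hA.eigenvalues i) ^ k : 𝕜) := by
  rw [← cfc_pow (hf := (finite_real_spectrum (A := A)).continuousOn g), hA.trace_cfc]
  simp only [RCLike.ofReal_pow]

theorem Matrix.IsHermitian.trace_pow_eq_of_trace_cfc_pow_eq (hA : A.IsHermitian)
    (hB : B.IsHermitian) {g : ℝ → ℝ} (hg : g.Injective)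
    (h : ∀ k, 0 < k → (cfc g A ^ k).trace = (cfc g B ^ k).trace) (m : ℕ) :
    (A ^ m).trace = (B ^ m).trace := by
  have hspec : univ.val.map hA.eigenvalues = univ.val.map hB.eigenvalues := by
    refine Multiset.map_injective hg ?_
    simp only [Multiset.map_map]
    refine map_univ_eq_of_sum_pow_eq fun k hk => ?_
    exact_mod_cast (hA.trace_cfc_pow g k).symm.trans ((h k hk).trans (hB.trace_cfc_pow g k))
  rw [← cfc_pow_id (R := ℝ) A m, ← cfc_pow_id (R := ℝ) B m, hA.trace_cfc, hB.trace_cfc]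
  simp only [sum_eq_multiset_sum, ← Function.comp_apply (f := fun x : ℝ => ((x ^ m : ℝ) : 𝕜)),
    ← Multiset.map_map, hspec]

end Spectral

theorem matFun_eq_cfc {n : ℕ} {A : Matrix (Fin n) (Fin n) ℝ} (hA : A.IsHermitian) (g : ℝ → ℝ) :
    matFun g hA = cfc g A := by
  rw [hA.cfc_eq, IsHermitian.cfc, Unitary.conjStarAlgAut_apply, matFun, RCLike.ofReal_real_eq_id]
  rfl

section Dynamics

open scoped Matrix.Norms.Operator

variable {ι : Type*} [Fintype ι] {s : Set ℝ} {t : ℝ}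

theorem Matrix.trace_mul_commutator_eq_zero {R : Type*} [CommRing R] {X Y : Matrix ι ι R}
    (h : Commute X Y) (C : Matrix ι ι R) : (X * (Y * C - C * Y)).trace = 0 := by
  rw [mul_sub, trace_sub, ← Matrix.mul_assoc, h.eq, Matrix.mul_assoc, trace_mul_comm Y,
    Matrix.mul_assoc, sub_self]

theorem HasDerivWithinAt.matrix_trace {F : ℝ → Matrix ι ι ℝ} {F' : Matrix ι ι ℝ}
    (h : HasDerivWithinAt F F' s t) : HasDerivWithinAt (fun τ => (F τ).trace) F'.trace s t :=
  (traceLinearMap ι ℝ ℝ).toContinuousLinearMap.hasFDerivAt.comp_hasDerivWithinAt t h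

variable [DecidableEq ι]

theorem Matrix.hasDerivWithinAt_of_entries {κ : Type*} [Fintype κ] [DecidableEq κ]
    {F : ℝ → Matrix ι κ ℝ} {F' : Matrix ι κ ℝ}
    (h : ∀ i j, HasDerivWithinAt (fun τ => F τ i j) (F' i j) s t) :
    HasDerivWithinAt F F' s t := by
  have hsum := HasDerivWithinAt.fun_sum fun i (_ : i ∈ univ) =>
    HasDerivWithinAt.fun_sum fun j (_ : j ∈ univ) => (h i j).smul_const (single i j (1 : ℝ))
  simp only [smul_single, smul_eq_mul, mul_one, ← matrix_eq_sum_single] at hsum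
  exact hsum

theorem hasDerivWithinAt_trace_pow_of_commute {N : ℝ → Matrix ι ι ℝ} {A C : Matrix ι ι ℝ}
    (hN : HasDerivWithinAt N (A * C - C * A) s t) (h : Commute A (N t)) (k : ℕ) :
    HasDerivWithinAt (fun τ => (N τ ^ k).trace) 0 s t := by
  refine (hN.fun_pow' k).matrix_trace.congr_deriv ?_
  rw [trace_sum]
  refine sum_eq_zero fun i _ => ?_
  rw [trace_mul_cycle, ← pow_add]
  exact trace_mul_commutator_eq_zero ((h.pow_right _).symm) C

theorem trace_pow_eq_of_hasDerivWithinAt_commutator {a b : ℝ} {N A C : ℝ → Matrix ι ι ℝ}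
    (hN : ∀ t ∈ Set.Icc a b, HasDerivWithinAt N (A t * C t - C t * A t) (Set.Icc a b) t)
    (h : ∀ t ∈ Set.Icc a b, Commute (A t) (N t)) (k : ℕ) :
    ∀ t ∈ Set.Icc a b, (N t ^ k).trace = (N a ^ k).trace := by
  intro t ht
  have hconst := norm_image_sub_le_of_norm_deriv_le_segment' (C := 0)
    (fun τ hτ => hasDerivWithinAt_trace_pow_of_commute (hN τ hτ) (h τ hτ) k)
    (fun _ _ => norm_zero.le) t ht
  simpa only [zero_mul, norm_le_zero_iff, sub_eq_zero] using hconst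

variable {S L : ℝ → Matrix ι ι ℝ} {A : Matrix ι ι ℝ}

theorem hasDerivWithinAt_trace_mul_of_lyapunov
    (hS : HasDerivWithinAt S (A * S t + S t * A) s t)
    (hL : HasDerivWithinAt L (-(L t * A) - A * L t) s t) :
    HasDerivWithinAt (fun τ => (L τ * S τ).trace) 0 s t := by
  refine (hL.fun_mul hS).matrix_trace.congr_deriv ?_
  have : (-(L t * A) - A * L t) * S t + L t * (A * S t + S t * A)
      = L t * S t * A - A * (L t * S t) := by noncomm_ring
  rw [this, trace_sub, trace_mul_comm A, sub_self]

theorem hasDerivWithinAt_anticommutator_sub_trace_smul (c : ℝ)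
    (hS : HasDerivWithinAt S (A * S t + S t * A) s t)
    (hL : HasDerivWithinAt L (-(L t * A) - A * L t) s t) :
    HasDerivWithinAt (fun τ => S τ * L τ + L τ * S τ - (c * (L τ * S τ).trace) • 1)
      (A * (S t * L t - L t * S t) - (S t * L t - L t * S t) * A) s t := by
  have hscalar := ((hasDerivWithinAt_trace_mul_of_lyapunov hS hL).const_mul c).smul_const
    (1 : Matrix ι ι ℝ)
  refine (((hS.fun_mul hL).fun_add (hL.fun_mul hS)).fun_sub hscalar).congr_deriv ?_
  simp only [mul_zero, zero_smul, sub_zero]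
  noncomm_ring

end Dynamics

theorem general_cost_optimal_gain_isospectral_general
    {n : ℕ} (T : ℝ) (hT : 0 < T)
    (f : ℝ → ℝ)
    (hf' : StrictMono (deriv f) ∨ StrictAnti (deriv f))
    (S L A : ℝ → Matrix (Fin n) (Fin n) ℝ)
    (hAsym : ∀ t, t ∈ Set.Icc (0:ℝ) T → (A t).IsHermitian)
    (hS' : ∀ t ∈ Set.Icc (0:ℝ) T, ∀ i j,
      HasDerivWithinAt (fun τ => S τ i j)
        ((A t * S t + S t * A t) i j) (Set.Icc (0:ℝ) T) t)
    (hL' : ∀ t ∈ Set.Icc (0:ℝ) T, ∀ i j,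
      HasDerivWithinAt (fun τ => L τ i j)
        ((-(L t * A t) - A t * L t) i j) (Set.Icc (0:ℝ) T) t)
    (hstat : ∀ t, ∀ ht : t ∈ Set.Icc (0:ℝ) T,
      matFun (deriv f) (hAsym t ht) =
        S t * L t + L t * S t
          - (((2 / (n : ℝ)) * (L t * S t).trace) • (1 : Matrix (Fin n) (Fin n) ℝ))) :
    ∀ m : ℕ, 0 < m → ∀ t ∈ Set.Icc (0:ℝ) T,
      ((A t) ^ m).trace = ((A 0) ^ m).trace := by
  have h0 : (0 : ℝ) ∈ Set.Icc 0 T := ⟨le_rfl, hT.le⟩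
  have hinj : (deriv f).Injective := hf'.elim StrictMono.injective StrictAnti.injective
  have hcfc (t) (ht : t ∈ Set.Icc 0 T) := (hstat t ht).symm.trans (matFun_eq_cfc _ _)
  have hN (t) (ht : t ∈ Set.Icc 0 T) := hasDerivWithinAt_anticommutator_sub_trace_smul (2 / n)
    (hasDerivWithinAt_of_entries (hS' t ht)) (hasDerivWithinAt_of_entries (hL' t ht))
  have hcomm (t) (ht : t ∈ Set.Icc 0 T) : Commute (A t)
      (S t * L t + L t * S t - ((2 / (n : ℝ)) * (L t * S t).trace) • 1) := by
    rw [hcfc t ht]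
    simpa only [cfc_id ℝ (A t) (hAsym t ht).isSelfAdjoint] using
      cfc_commute_cfc (R := ℝ) id (deriv f) (A t)
  have hconst := trace_pow_eq_of_hasDerivWithinAt_commutator hN hcomm
  intro m _ t ht
  refine (hAsym t ht).trace_pow_eq_of_trace_cfc_pow_eq (hAsym 0 h0) hinj (fun k _ => ?_) m
  rw [← hcfc t ht, ← hcfc 0 h0]
  exact hconst k t ht

/-- Proposition 2, isospectrality for general spread-penalizing costs.
Under the stationarity conditions for minimizing `∫₀ᵀ tr(f(A_t)) dt` subject to the
Lyapunov equation, with `f'` strictly monotone (hence injective), the symmetric traceless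
gain `A_t` is isospectral: `t ↦ tr(A_t^m)` is constant on `[0,T]` for every `m ≥ 1`. -/
theorem general_cost_optimal_gain_isospectral
    {n : ℕ} (hn : 1 ≤ n) (T : ℝ) (hT : 0 < T)
    (f : ℝ → ℝ) (hf : ContDiff ℝ 2 f)
    (hf' : StrictMono (deriv f) ∨ StrictAnti (deriv f))
    (S L A : ℝ → Matrix (Fin n) (Fin n) ℝ)
    (hSsym : ∀ t ∈ Set.Icc (0:ℝ) T, (S t).IsHermitian)
    (hLsym : ∀ t ∈ Set.Icc (0:ℝ) T, (L t).IsHermitian)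
    (hAsym : ∀ t, t ∈ Set.Icc (0:ℝ) T → (A t).IsHermitian)
    (hAtr : ∀ t ∈ Set.Icc (0:ℝ) T, (A t).trace = 0)
    (hSdiff : ∀ i j, DifferentiableOn ℝ (fun t => S t i j) (Set.Icc (0:ℝ) T))
    (hLdiff : ∀ i j, DifferentiableOn ℝ (fun t => L t i j) (Set.Icc (0:ℝ) T))
    (hAdiff : ∀ i j, DifferentiableOn ℝ (fun t => A t i j) (Set.Icc (0:ℝ) T))
    (hS' : ∀ t ∈ Set.Icc (0:ℝ) T, ∀ i j,
      HasDerivWithinAt (fun τ => S τ i j)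
        ((A t * S t + S t * A t) i j) (Set.Icc (0:ℝ) T) t)
    (hL' : ∀ t ∈ Set.Icc (0:ℝ) T, ∀ i j,
      HasDerivWithinAt (fun τ => L τ i j)
        ((-(L t * A t) - A t * L t) i j) (Set.Icc (0:ℝ) T) t)
    (hstat : ∀ t, ∀ ht : t ∈ Set.Icc (0:ℝ) T,
      matFun (deriv f) (hAsym t ht) =
        S t * L t + L t * S t
          - (((2 / (n : ℝ)) * (L t * S t).trace) • (1 : Matrix (Fin n) (Fin n) ℝ))) :
    ∀ m : ℕ, 0 < m → ∀ t ∈ Set.Icc (0:ℝ) T,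
      ((A t) ^ m).trace = ((A 0) ^ m).trace :=
  general_cost_optimal_gain_isospectral_general T hT f hf' S L A hAsym hS' hL' hstat
end

section
/- Let n ≥ 1, T > 0, D a real diagonal n×n matrix, and Σ₀, Σ_T ∈ S⁺⁺ⁿ. If there exist c > 0 and t ∈ [0,T] such that log(λ(Σ_T)/c) ≺ 2(T−t)·λ(D) and log(λ(Σ₀)/c) ≺ 2t·λ(−D) (with division by c and log applied entrywise), then Σ_T ∈ R(Σ₀, D, T). -/
open MeasureTheory Matrix

/-- The entries of `v` sorted in decreasing order. -/
noncomputable def sortDesc {n : ℕ} (v : Fin n → ℝ) : Fin n → ℝ :=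
  fun i => v (Tuple.sort v i.rev)

/-- `x` is majorized by `y`. -/
def IsMajorizedBy {n : ℕ} (x y : Fin n → ℝ) : Prop :=
  (∑ i, x i = ∑ i, y i) ∧
  ∀ k : ℕ, k < n →
    ∑ i ∈ Finset.univ.filter (fun i : Fin n => (i : ℕ) < k), sortDesc x i ≤
    ∑ i ∈ Finset.univ.filter (fun i : Fin n => (i : ℕ) < k), sortDesc y i

/-- `ΣT` is reachable from `Σ₀` under isospectral control with spectrum `D` in time `T`. -/
noncomputable def IsReachable {n : ℕ} (P₀ PT D : Matrix (Fin n) (Fin n) ℝ) (T : ℝ) : Prop :=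
  ∃ U S : ℝ → Matrix (Fin n) (Fin n) ℝ,
    (∀ i j, Measurable fun t => U t i j) ∧
    (∀ t ∈ Set.Icc (0:ℝ) T, U t * (U t)ᵀ = 1) ∧
    (∀ t ∈ Set.Icc (0:ℝ) T, (S t).PosDef) ∧
    S 0 = P₀ ∧ S T = PT ∧
    (∀ i j, IntervalIntegrable
        (fun t => ((U t * D * (U t)ᵀ) * S t + S t * (U t * D * (U t)ᵀ)) i j)
        MeasureTheory.volume 0 T) ∧
    (∀ t ∈ Set.Icc (0:ℝ) T, ∀ i j,
      S t i j = P₀ i j +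
        ∫ s in (0:ℝ)..t, ((U s * D * (U s)ᵀ) * S s + S s * (U s * D * (U s)ᵀ)) i j)

/-!
By Rado's theorem, `log (λ(Σ_T) / c) ≺ 2 (T - t) λ(D)` says that `log (λ(Σ_T) / c)` is a convex
combination `∑ σ, w σ • 2 (T - t) (D ∘ σ)` of permutations of `2 (T - t) λ(D)`. Fix an orthonormal
eigenbasis `V` of `Σ_T`. Holding the control constant, equal to `V` with its columns permuted by
`σ`, for time `(T - t) w σ` keeps the eigenvectors and multiplies the `i`-th eigenvalue by
`exp (2 (T - t) w σ D_{σ i})`; running these constant controls one after the other therefore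
steers `c • 1` to `Σ_T` in time `T - t`. In the same way, the second majorization makes
`log (c / λ(Σ₀)) = -log (λ(Σ₀) / c)` a convex combination of permutations of `2 t λ(D)`, which
steers `Σ₀` to `c • 1` in time `t`; concatenating the two controls proves the theorem.
-/

section Majorization

open Finset

variable {n : ℕ}

theorem sum_range_mul_nonneg_of_partialSums_nonneg (f g : ℕ → ℝ)
    (hf : ∀ i, i + 1 < n → f (i + 1) ≤ f i) (hg : ∀ k < n, 0 ≤ ∑ j ∈ range k, g j)
    (hg_total : ∑ j ∈ range n, g j = 0) :
    0 ≤ ∑ i ∈ range n, f i * g i := by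
  have := sum_range_by_parts f g n
  simp only [smul_eq_mul] at this
  rw [this, hg_total, mul_zero, zero_sub, neg_nonneg]
  refine sum_nonpos fun i hi => ?_
  rw [mem_range] at hi
  exact mul_nonpos_of_nonpos_of_nonneg (by linarith [hf i (by omega)]) (hg _ (by omega))

theorem sum_mul_le_sum_mul_of_prefixSums_le {c x y : Fin n → ℝ} (hc : Antitone c)
    (hxy : ∀ k < n, ∑ i ∈ univ.filter (fun i : Fin n => (i : ℕ) < k), x i ≤
      ∑ i ∈ univ.filter (fun i : Fin n => (i : ℕ) < k), y i)
    (hsum : ∑ i, x i = ∑ i, y i) :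
    ∑ i, c i * x i ≤ ∑ i, c i * y i := by
  let pad : (Fin n → ℝ) → ℕ → ℝ := fun v k => if h : k < n then v ⟨k, h⟩ else 0
  have pad_coe (v : Fin n → ℝ) (i : Fin n) : pad v i = v i := dif_pos i.isLt
  have prefix_eq (v : Fin n → ℝ) (k : ℕ) (hk : k ≤ n) :
      ∑ i ∈ univ.filter (fun i : Fin n => (i : ℕ) < k), v i = ∑ j ∈ range k, pad v j := by
    have hfilter : (range n).filter (· < k) = range k := by
      ext j; simp only [mem_filter, mem_range]; omega
    rw [← hfilter, sum_filter, sum_filter, ← Fin.sum_univ_eq_sum_range]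
    simp only [pad_coe]
  have hpartial : ∀ k ≤ n, ∑ j ∈ range k, pad (y - x) j =
      ∑ i ∈ univ.filter (fun i : Fin n => (i : ℕ) < k), y i -
        ∑ i ∈ univ.filter (fun i : Fin n => (i : ℕ) < k), x i := by
    intro k hk
    rw [← prefix_eq _ k hk, ← sum_sub_distrib]
    rfl
  have key := sum_range_mul_nonneg_of_partialSums_nonneg (n := n) (pad c) (pad (y - x))
    (fun i hi => by
      simpa only [pad, dif_pos hi, dif_pos (Nat.lt_of_succ_lt hi)] using
        hc (show (⟨i, Nat.lt_of_succ_lt hi⟩ : Fin n) ≤ ⟨i + 1, hi⟩ from Nat.le_succ i))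
    (fun k hk => by rw [hpartial k hk.le]; linarith [hxy k hk])
    (by rw [hpartial n le_rfl]; simp [hsum])
  rw [← Fin.sum_univ_eq_sum_range] at key
  simp only [pad_coe, Pi.sub_apply, mul_sub, sum_sub_distrib] at key
  linarith

theorem exists_perm_sortDesc_eq (v : Fin n → ℝ) : ∃ σ : Equiv.Perm (Fin n), sortDesc v = v ∘ σ :=
  ⟨Fin.revPerm.trans (Tuple.sort v), rfl⟩

theorem antitone_sortDesc (v : Fin n → ℝ) : Antitone (sortDesc v) :=
  fun _ _ hij => Tuple.monotone_sort v (Fin.rev_le_rev.mpr hij)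

theorem sum_sortDesc (v : Fin n → ℝ) : ∑ i, sortDesc v i = ∑ i, v i := by
  obtain ⟨σ, hσ⟩ := exists_perm_sortDesc_eq v
  exact hσ ▸ Equiv.sum_comp σ v

theorem sum_mul_le_sum_sortDesc_mul_sortDesc (c x : Fin n → ℝ) :
    ∑ i, c i * x i ≤ ∑ i, sortDesc c i * sortDesc x i := by
  obtain ⟨σ, hσ⟩ := exists_perm_sortDesc_eq c
  obtain ⟨τ, hτ⟩ := exists_perm_sortDesc_eq x
  have hmono := (antitone_sortDesc c).monovary (antitone_sortDesc x)
  calc ∑ i, c i * x i = ∑ i, sortDesc c i * sortDesc x ((σ.trans τ.symm) i) := by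
        rw [← Equiv.sum_comp σ]
        simp [hσ, hτ]
    _ ≤ _ := hmono.sum_mul_comp_perm_le_sum_mul

theorem IsMajorizedBy.exists_perm_sum_mul_le {x y : Fin n → ℝ} (h : IsMajorizedBy x y)
    (c : Fin n → ℝ) : ∃ σ : Equiv.Perm (Fin n), ∑ i, c i * x i ≤ ∑ i, c i * y (σ i) := by
  obtain ⟨σ, hσ⟩ := exists_perm_sortDesc_eq c
  obtain ⟨τ, hτ⟩ := exists_perm_sortDesc_eq y
  refine ⟨σ.symm.trans τ, ?_⟩
  calc ∑ i, c i * x i ≤ ∑ i, sortDesc c i * sortDesc x i :=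
        sum_mul_le_sum_sortDesc_mul_sortDesc c x
    _ ≤ ∑ i, sortDesc c i * sortDesc y i :=
        sum_mul_le_sum_mul_of_prefixSums_le (antitone_sortDesc c) h.2
          (by rw [sum_sortDesc, sum_sortDesc, h.1])
    _ = ∑ i, c i * y ((σ.symm.trans τ) i) := by
        rw [← Equiv.sum_comp σ (fun i => c i * y ((σ.symm.trans τ) i))]
        simp [hσ, hτ]

/-- Rado's theorem, proved by separating `x` from the hull with a linear functional. -/
theorem IsMajorizedBy.mem_convexHull {x y : Fin n → ℝ} (h : IsMajorizedBy x y) :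
    x ∈ convexHull ℝ (Set.range fun σ : Equiv.Perm (Fin n) => y ∘ σ) := by
  classical
  by_contra hx
  obtain ⟨f, u, hf, hfx⟩ := geometric_hahn_banach_closed_point (convex_convexHull ℝ _)
    ((Set.finite_range _).isCompact_convexHull ℝ).isClosed hx
  set c : Fin n → ℝ := fun i => f fun j => if i = j then 1 else 0
  have hf_apply (z : Fin n → ℝ) : f z = ∑ i, c i * z i := by
    simp only [c, mul_comm (f _)]
    exact LinearMap.pi_apply_eq_sum_univ f.toLinearMap z
  obtain ⟨σ, hσ⟩ := h.exists_perm_sum_mul_le c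
  have hyσ := hf _ (subset_convexHull ℝ _ ⟨σ, rfl⟩)
  rw [hf_apply] at hyσ hfx
  exact (hσ.trans hyσ.le).not_gt hfx

theorem neg_mem_convexHull_range {ι E : Type*} [AddCommGroup E] [Module ℝ E] {v : ι → E} {x : E}
    (h : x ∈ convexHull ℝ (Set.range v)) : -x ∈ convexHull ℝ (Set.range fun i => -v i) := by
  rw [← Set.neg_range, convexHull_neg]
  exact Set.neg_mem_neg.mpr h

end Majorization

section Splice

open Set

variable {α : Type*} (g₁ g₂ : ℝ → α) (s : ℝ)

noncomputable def splice : ℝ → α := fun τ => if τ ≤ s then g₁ τ else g₂ (τ - s)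

variable {g₁ g₂ s}

theorem splice_of_le {τ : ℝ} (h : τ ≤ s) : splice g₁ g₂ s τ = g₁ τ := if_pos h

theorem splice_of_lt {τ : ℝ} (h : s < τ) : splice g₁ g₂ s τ = g₂ (τ - s) := if_neg h.not_ge

theorem splice_apply₂ {β γ : Type*} (F : α → β → γ) (h₁ h₂ : ℝ → β) (τ : ℝ) :
    F (splice g₁ g₂ s τ) (splice h₁ h₂ s τ) =
      splice (fun τ => F (g₁ τ) (h₁ τ)) (fun τ => F (g₂ τ) (h₂ τ)) s τ := by
  unfold splice; split_ifs <;> rfl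

theorem splice_apply {β : Type*} (F : α → β) (τ : ℝ) :
    F (splice g₁ g₂ s τ) = splice (F ∘ g₁) (F ∘ g₂) s τ := by
  unfold splice; split_ifs <;> rfl

theorem forall_splice_mem_Icc {p : α → Prop} {s' : ℝ}
    (h₁ : ∀ τ ∈ Icc 0 s, p (g₁ τ)) (h₂ : ∀ τ ∈ Icc 0 s', p (g₂ τ)) :
    ∀ τ ∈ Icc 0 (s + s'), p (splice g₁ g₂ s τ) := by
  intro τ ⟨hτ₀, hτ⟩
  rcases le_or_gt τ s with hτs | hsτ
  · exact splice_of_le hτs ▸ h₁ τ ⟨hτ₀, hτs⟩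
  · exact splice_of_lt hsτ ▸ h₂ (τ - s) ⟨by linarith, by linarith⟩

theorem Measurable.splice [MeasurableSpace α] (h₁ : Measurable g₁) (h₂ : Measurable g₂) :
    Measurable (splice g₁ g₂ s) :=
  Measurable.ite measurableSet_Iic h₁ (h₂.comp (measurable_id.sub_const s))

theorem IntervalIntegrable.splice {E : Type*} [NormedAddCommGroup E] {g₁ g₂ : ℝ → E} {s s' : ℝ}
    (hs : 0 ≤ s) (hs' : 0 ≤ s')
    (h₁ : IntervalIntegrable g₁ volume 0 s) (h₂ : IntervalIntegrable g₂ volume 0 s') :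
    IntervalIntegrable (_root_.splice g₁ g₂ s) volume 0 (s + s') := by
  refine IntervalIntegrable.trans (b := s) (h₁.congr fun τ hτ => ?_) ?_
  · rw [uIoc_of_le hs] at hτ
    exact (splice_of_le hτ.2).symm
  · have := h₂.comp_sub_right s
    rw [zero_add, add_comm] at this
    refine this.congr fun τ hτ => ?_
    rw [uIoc_of_le (by linarith)] at hτ
    exact (splice_of_lt hτ.1).symm

theorem integral_splice_of_le {E : Type*} [NormedAddCommGroup E] [NormedSpace ℝ E]
    {g₁ g₂ : ℝ → E} {t : ℝ} (ht : 0 ≤ t) (hts : t ≤ s) :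
    ∫ τ in (0 : ℝ)..t, splice g₁ g₂ s τ = ∫ τ in (0 : ℝ)..t, g₁ τ :=
  intervalIntegral.integral_congr fun τ hτ => by
    rw [uIcc_of_le ht] at hτ
    exact splice_of_le (hτ.2.trans hts)

theorem integral_splice_of_ge {E : Type*} [NormedAddCommGroup E] [NormedSpace ℝ E]
    {g₁ g₂ : ℝ → E} {t : ℝ} (hs : 0 ≤ s) (hst : s ≤ t)
    (h₁ : IntervalIntegrable g₁ volume 0 s) (h₂ : IntervalIntegrable g₂ volume 0 (t - s)) :
    ∫ τ in (0 : ℝ)..t, splice g₁ g₂ s τ =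
      (∫ τ in (0 : ℝ)..s, g₁ τ) + ∫ τ in (0 : ℝ)..(t - s), g₂ τ := by
  have hint := IntervalIntegrable.splice hs (sub_nonneg.mpr hst) h₁ h₂
  rw [add_sub_cancel] at hint
  have hs_mem : s ∈ uIcc 0 t := mem_uIcc_of_le hs hst
  rw [← intervalIntegral.integral_add_adjacent_intervals
      (hint.mono_set (uIcc_subset_uIcc left_mem_uIcc hs_mem))
      (hint.mono_set (uIcc_subset_uIcc hs_mem right_mem_uIcc)),
    integral_splice_of_le hs le_rfl]
  congr 1
  rw [← sub_self s, ← intervalIntegral.integral_comp_sub_right]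
  refine intervalIntegral.integral_congr_ae (Filter.Eventually.of_forall fun τ hτ => ?_)
  rw [uIoc_of_le hst] at hτ
  exact splice_of_lt hτ.1

end Splice

section ConjDiagonal

variable {n : ℕ} {V : Matrix (Fin n) (Fin n) ℝ}

theorem posDef_conj_diagonal (hV : V * Vᵀ = 1) {w : Fin n → ℝ} (hw : ∀ i, 0 < w i) :
    (V * diagonal w * Vᵀ).PosDef := by
  rw [← conjTranspose_eq_transpose_of_trivial]
  exact (PosDef.diagonal hw).mul_mul_conjTranspose_same
    (vecMul_injective_of_isUnit (IsUnit.of_mul_eq_one Vᵀ hV))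

theorem conj_diagonal_apply (w : Fin n → ℝ) (i j : Fin n) :
    (V * diagonal w * Vᵀ) i j = ∑ m, V i m * w m * V j m := by
  rw [mul_apply]
  simp [mul_diagonal]

theorem conj_diagonal_mul_conj_diagonal (hV : V * Vᵀ = 1) (p q : Fin n → ℝ) :
    (V * diagonal p * Vᵀ) * (V * diagonal q * Vᵀ) = V * diagonal (fun i => p i * q i) * Vᵀ := by
  have hV' : Vᵀ * V = 1 := mul_eq_one_comm.mp hV
  rw [← diagonal_mul_diagonal]
  simp only [Matrix.mul_assoc]
  rw [← Matrix.mul_assoc Vᵀ V, hV', Matrix.one_mul]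

theorem submatrix_mul_diagonal_mul_transpose (d : Fin n → ℝ) (σ : Equiv.Perm (Fin n)) :
    V.submatrix id σ.symm * diagonal d * (V.submatrix id σ.symm)ᵀ = V * diagonal (d ∘ σ) * Vᵀ := by
  ext i j
  rw [conj_diagonal_apply, conj_diagonal_apply, ← Equiv.sum_comp σ]
  simp

theorem submatrix_mul_transpose_submatrix (hV : V * Vᵀ = 1) (σ : Equiv.Perm (Fin n)) :
    V.submatrix id σ.symm * (V.submatrix id σ.symm)ᵀ = 1 := by
  rw [transpose_submatrix, submatrix_mul_equiv, hV, submatrix_id_id]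

theorem Matrix.IsHermitian.exists_orthogonal_eq_conj_diagonal {P : Matrix (Fin n) (Fin n) ℝ}
    (hP : P.IsHermitian) : ∃ V : Matrix (Fin n) (Fin n) ℝ, V * Vᵀ = 1 ∧
      P = V * diagonal hP.eigenvalues * Vᵀ := by
  have hstar : star (hP.eigenvectorUnitary : Matrix (Fin n) (Fin n) ℝ) =
      (hP.eigenvectorUnitary : Matrix (Fin n) (Fin n) ℝ)ᵀ :=
    conjTranspose_eq_transpose_of_trivial _
  refine ⟨hP.eigenvectorUnitary, hstar ▸ mem_unitaryGroup_iff.mp hP.eigenvectorUnitary.2, ?_⟩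
  rw [← hstar]
  exact hP.spectral_theorem

theorem conj_diagonal_const (hV : V * Vᵀ = 1) (c : ℝ) :
    V * diagonal (fun _ => c) * Vᵀ = diagonal fun _ => c := by
  rw [← smul_one_eq_diagonal, Matrix.mul_smul, Matrix.smul_mul, Matrix.mul_one, hV]

end ConjDiagonal

section Reachability

open Set

variable {n : ℕ} {D V : Matrix (Fin n) (Fin n) ℝ}

theorem IsReachable.trans {P Q R : Matrix (Fin n) (Fin n) ℝ} {s₁ s₂ : ℝ}
    (hs₁ : 0 ≤ s₁) (hs₂ : 0 ≤ s₂) (h₁ : IsReachable P Q D s₁) (h₂ : IsReachable Q R D s₂) :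
    IsReachable P R D (s₁ + s₂) := by
  obtain ⟨U₁, S₁, hU₁, hU₁o, hS₁, hS₁0, hS₁T, hI₁, hE₁⟩ := h₁
  obtain ⟨U₂, S₂, hU₂, hU₂o, hS₂, hS₂0, hS₂T, hI₂, hE₂⟩ := h₂
  let rhs : Matrix (Fin n) (Fin n) ℝ → Matrix (Fin n) (Fin n) ℝ → Matrix (Fin n) (Fin n) ℝ :=
    fun U S => (U * D * Uᵀ) * S + S * (U * D * Uᵀ)
  have hrhs (i j : Fin n) : (fun τ => rhs (splice U₁ U₂ s₁ τ) (splice S₁ S₂ s₁ τ) i j) =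
      splice (fun τ => rhs (U₁ τ) (S₁ τ) i j) (fun τ => rhs (U₂ τ) (S₂ τ) i j) s₁ :=
    funext fun τ => splice_apply₂ (fun U S => rhs U S i j) S₁ S₂ τ
  refine ⟨splice U₁ U₂ s₁, splice S₁ S₂ s₁, fun i j => ?_,
    forall_splice_mem_Icc (p := fun U => U * Uᵀ = 1) hU₁o hU₂o,
    forall_splice_mem_Icc (p := PosDef) hS₁ hS₂, splice_of_le hs₁ ▸ hS₁0, ?_, fun i j => ?_, ?_⟩
  · have hentry : (fun τ => splice U₁ U₂ s₁ τ i j) =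
        splice (fun τ => U₁ τ i j) (fun τ => U₂ τ i j) s₁ :=
      funext fun τ => splice_apply (fun M : Matrix (Fin n) (Fin n) ℝ => M i j) τ
    exact hentry ▸ (hU₁ i j).splice (hU₂ i j)
  · rcases hs₂.eq_or_lt with rfl | hs₂
    · rw [add_zero, splice_of_le le_rfl, hS₁T, ← hS₂0, hS₂T]
    · rw [splice_of_lt (by linarith), add_sub_cancel_left, hS₂T]
  · exact (hrhs i j).symm ▸ (hI₁ i j).splice hs₁ hs₂ (hI₂ i j)
  · intro t ⟨ht₀, ht⟩ i j
    show _ = _ + ∫ τ in (0 : ℝ)..t, rhs (splice U₁ U₂ s₁ τ) (splice S₁ S₂ s₁ τ) i j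
    rw [hrhs]
    rcases le_or_gt t s₁ with hts | hst
    · rw [splice_of_le hts, integral_splice_of_le ht₀ hts]
      exact hE₁ t ⟨ht₀, hts⟩ i j
    · have hmem : t - s₁ ∈ Icc 0 s₂ := ⟨by linarith, by linarith⟩
      rw [splice_of_lt hst, integral_splice_of_ge hs₁ hst.le (hI₁ i j)
        ((hI₂ i j).mono_set (uIcc_subset_uIcc left_mem_uIcc (mem_uIcc_of_le hmem.1 hmem.2))),
        hE₂ _ hmem i j, ← hS₁T, hE₁ s₁ ⟨hs₁, le_rfl⟩ i j]
      ring

theorem isReachable_of_hasDerivAt {U : Matrix (Fin n) (Fin n) ℝ} (hU : U * Uᵀ = 1)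
    {S : ℝ → Matrix (Fin n) (Fin n) ℝ} {s : ℝ} (hS : ∀ t ∈ Icc 0 s, (S t).PosDef)
    (hderiv : ∀ t i j, HasDerivAt (fun τ => S τ i j)
      ((U * D * Uᵀ * S t + S t * (U * D * Uᵀ)) i j) t) :
    IsReachable (S 0) (S s) D s := by
  have hS_cont : Continuous S := continuous_pi fun i => continuous_pi fun j =>
    continuous_iff_continuousAt.mpr fun t => (hderiv t i j).continuousAt
  have hrhs_cont (i j : Fin n) :
      Continuous fun t => (U * D * Uᵀ * S t + S t * (U * D * Uᵀ)) i j :=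
    ((continuous_const.matrix_mul hS_cont).add
      (hS_cont.matrix_mul continuous_const)).matrix_elem i j
  refine ⟨fun _ => U, S, fun _ _ => measurable_const, fun _ _ => hU, hS, rfl, rfl,
    fun i j => (hrhs_cont i j).intervalIntegrable 0 s, fun t _ i j => ?_⟩
  rw [intervalIntegral.integral_eq_sub_of_hasDerivAt (fun τ _ => hderiv τ i j)
    ((hrhs_cont i j).intervalIntegrable 0 t)]
  ring

theorem isReachable_conj_diagonal_exp (hD : D.IsDiag) (hV : V * Vᵀ = 1)
    (σ : Equiv.Perm (Fin n)) {μ : Fin n → ℝ} (hμ : ∀ i, 0 < μ i) (s : ℝ) :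
    IsReachable (V * diagonal μ * Vᵀ)
      (V * diagonal (fun i => μ i * Real.exp (2 * s * D (σ i) (σ i))) * Vᵀ) D s := by
  set a : Fin n → ℝ := fun i => D (σ i) (σ i)
  set U := V.submatrix id σ.symm
  have hA : U * D * Uᵀ = V * diagonal a * Vᵀ := by
    conv_lhs => rw [← hD.diagonal_diag]
    exact submatrix_mul_diagonal_mul_transpose D.diag σ
  let S : ℝ → Matrix (Fin n) (Fin n) ℝ :=
    fun τ => V * diagonal (fun i => μ i * Real.exp (2 * τ * a i)) * Vᵀ
  have hS_deriv (t : ℝ) (i j : Fin n) :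
      HasDerivAt (fun τ => S τ i j) ((U * D * Uᵀ * S t + S t * (U * D * Uᵀ)) i j) t := by
    rw [hA, conj_diagonal_mul_conj_diagonal hV, conj_diagonal_mul_conj_diagonal hV,
      ← Matrix.add_mul, ← Matrix.mul_add, diagonal_add, conj_diagonal_apply]
    simp only [S, conj_diagonal_apply]
    refine HasDerivAt.fun_sum fun m _ => ?_
    have := ((((hasDerivAt_id' t).const_mul 2).mul_const (a m)).exp.const_mul (μ m)).const_mul
      (V i m) |>.mul_const (V j m)
    exact this.congr_deriv (by ring)
  have h := isReachable_of_hasDerivAt (submatrix_mul_transpose_submatrix hV σ) (s := s)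
    (fun t _ => posDef_conj_diagonal hV fun i => mul_pos (hμ i) (Real.exp_pos _)) hS_deriv
  simpa [S] using h

theorem isReachable_conj_diagonal_exp_sum (hD : D.IsDiag) (hV : V * Vᵀ = 1)
    (F : Finset (Equiv.Perm (Fin n)))
    {τ : Equiv.Perm (Fin n) → ℝ} (hτ : ∀ σ ∈ F, 0 ≤ τ σ) {μ : Fin n → ℝ} (hμ : ∀ i, 0 < μ i) :
    IsReachable (V * diagonal μ * Vᵀ)
      (V * diagonal (fun i => μ i * Real.exp (∑ σ ∈ F, 2 * τ σ * D (σ i) (σ i))) * Vᵀ) D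
      (∑ σ ∈ F, τ σ) := by
  induction F using Finset.induction_on generalizing μ with
  | empty => simpa using isReachable_conj_diagonal_exp hD hV 1 hμ 0
  | insert σ F hσF ih =>
    rw [Finset.forall_mem_insert] at hτ
    have hstep := isReachable_conj_diagonal_exp hD hV σ hμ (τ σ)
    have hrest := ih hτ.2 (μ := fun i => μ i * Real.exp (2 * τ σ * D (σ i) (σ i)))
      fun i => mul_pos (hμ i) (Real.exp_pos _)
    have h := hstep.trans hτ.1 (Finset.sum_nonneg hτ.2) hrest
    simpa only [Finset.sum_insert hσF, Real.exp_add, ← mul_assoc] using h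

theorem isReachable_conj_diagonal_of_mem_convexHull (hD : D.IsDiag) (hV : V * Vᵀ = 1)
    {μ ν : Fin n → ℝ}
    (hμ : ∀ i, 0 < μ i) (hν : ∀ i, 0 < ν i) {s : ℝ} (hs : 0 ≤ s)
    (h : (fun i => Real.log (ν i / μ i)) ∈
      convexHull ℝ (Set.range fun σ : Equiv.Perm (Fin n) => (fun i => 2 * s * D i i) ∘ σ)) :
    IsReachable (V * diagonal μ * Vᵀ) (V * diagonal ν * Vᵀ) D s := by
  rw [convexHull_range_eq_exists_affineCombination] at h
  obtain ⟨F, w, hw₀, hw₁, hx⟩ := h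
  rw [Finset.affineCombination_eq_linear_combination _ _ _ hw₁] at hx
  have h := isReachable_conj_diagonal_exp_sum hD hV F (τ := fun σ => s * w σ)
    (fun σ hσ => mul_nonneg hs (hw₀ σ hσ)) hμ
  have hexp (i : Fin n) : ∑ σ ∈ F, 2 * (s * w σ) * D (σ i) (σ i) = Real.log (ν i / μ i) := by
    rw [← congrFun hx i, Finset.sum_apply]
    refine Finset.sum_congr rfl fun σ _ => ?_
    simp only [Pi.smul_apply, Function.comp_apply, smul_eq_mul]
    ring
  simpa only [hexp, Real.exp_log (div_pos (hν _) (hμ _)), mul_div_cancel₀ _ (hμ _).ne',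
    ← Finset.mul_sum, hw₁, mul_one] using h

end Reachability

theorem isReachable_of_majorizations_through_identity_general
    {n : ℕ} (T : ℝ)
    (D P₀ PT : Matrix (Fin n) (Fin n) ℝ) (hD : D.IsDiag)
    (hP₀ : P₀.PosDef) (hPT : PT.PosDef)
    (h : ∃ c : ℝ, 0 < c ∧ ∃ t ∈ Set.Icc (0:ℝ) T,
      IsMajorizedBy (fun i => Real.log (hPT.1.eigenvalues i / c))
        (fun i => 2 * (T - t) * D i i) ∧
      IsMajorizedBy (fun i => Real.log (hP₀.1.eigenvalues i / c))
        (fun i => 2 * t * (-(D i i)))) :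
    IsReachable P₀ PT D T := by
  obtain ⟨c, hc, t, ⟨ht₀, htT⟩, hmT, hm₀⟩ := h
  obtain ⟨V₀, hV₀, hP₀_eq⟩ := hP₀.1.exists_orthogonal_eq_conj_diagonal
  obtain ⟨VT, hVT, hPT_eq⟩ := hPT.1.exists_orthogonal_eq_conj_diagonal
  have hm₀' : (fun i => Real.log (c / hP₀.1.eigenvalues i)) ∈ convexHull ℝ
      (Set.range fun σ : Equiv.Perm (Fin n) => (fun i => 2 * t * D i i) ∘ σ) := by
    have := neg_mem_convexHull_range hm₀.mem_convexHull
    simpa only [Pi.neg_def, Function.comp_def, mul_neg, neg_neg, ← Real.log_inv, inv_div]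
      using this
  have phase₀ : IsReachable P₀ (diagonal fun _ => c) D t := by
    rw [hP₀_eq, ← conj_diagonal_const hV₀ c]
    exact isReachable_conj_diagonal_of_mem_convexHull hD hV₀ hP₀.eigenvalues_pos
      (fun _ => hc) ht₀ hm₀'
  have phaseT : IsReachable (diagonal fun _ => c) PT D (T - t) := by
    rw [hPT_eq, ← conj_diagonal_const hVT c]
    exact isReachable_conj_diagonal_of_mem_convexHull hD hVT (fun _ => hc)
      hPT.eigenvalues_pos (sub_nonneg.mpr htT) hmT.mem_convexHull
  simpa using phase₀.trans ht₀ (sub_nonneg.mpr htT) phaseT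

/-- Theorem 17, sufficiency via an isotropic intermediate state.
If there exist `c > 0` and `t ∈ [0,T]` with `log(λ(ΣT)/c) ≺ 2(T−t)·λ(D)` and
`log(λ(Σ₀)/c) ≺ 2t·λ(−D)`, then `ΣT ∈ R(Σ₀, D, T)`. -/
theorem isReachable_of_majorizations_through_identity
    {n : ℕ} (hn : 1 ≤ n) (T : ℝ) (hT : 0 < T)
    (D P₀ PT : Matrix (Fin n) (Fin n) ℝ) (hD : D.IsDiag)
    (hP₀ : P₀.PosDef) (hPT : PT.PosDef)
    (h : ∃ c : ℝ, 0 < c ∧ ∃ t ∈ Set.Icc (0:ℝ) T,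
      IsMajorizedBy (fun i => Real.log (hPT.1.eigenvalues i / c))
        (fun i => 2 * (T - t) * D i i) ∧
      IsMajorizedBy (fun i => Real.log (hP₀.1.eigenvalues i / c))
        (fun i => 2 * t * (-(D i i)))) :
    IsReachable P₀ PT D T :=
  isReachable_of_majorizations_through_identity_general T D P₀ PT hD hP₀ hPT h
end

section
/- Let n ≥ 1, T > 0, α ∈ ℝ, D a real diagonal n×n matrix, and Σ₀, Σ ∈ S⁺⁺ⁿ. Then Σ ∈ R(Σ₀, D + αI, T) if and only if e^{−2Tα}·Σ ∈ R(Σ₀, D, T); that is, adding a multiple α of the identity to the prescribed spectrum rescales the reachable set isotropically: R(Σ₀, D, T) = e^{−2Tα}·R(Σ₀, D + αI, T). -/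
/-!
If `Σ` solves `Σ' = AΣ + ΣA` with `A = U (D + αI) Uᵀ = U D Uᵀ + αI`, then `e^{-2αt} Σ` solves the
same equation with `U D Uᵀ`, under the same control `U` and from the same initial value; positive
definiteness is preserved by positive scaling. The converse is the same statement for `-α`.
Trajectories are only absolutely continuous, so the product rule for `e^{-2αt} Σ(t)` is used in
integral form, via integration by parts for absolutely continuous functions.
-/

open MeasureTheory Matrix

open Set

theorem mul_const_add_integral_eq {φ g : ℝ → ℝ} {b t : ℝ} (c : ℝ) (hφ : ContDiff ℝ 1 φ)
    (hg : IntervalIntegrable g volume b t) :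
    φ t * (c + ∫ s in b..t, g s) =
      φ b * c + ∫ s in b..t, (deriv φ s * (c + ∫ u in b..s, g u) + φ s * g s) := by
  set F : ℝ → ℝ := fun x ↦ c + ∫ u in b..x, g u
  have hF : AbsolutelyContinuousOnInterval F b t :=
    contDiffOn_const.absolutelyContinuousOnInterval.add
      (hg.absolutelyContinuousOnInterval_intervalIntegral left_mem_uIcc)
  have hftc := (hφ.contDiffOn.absolutelyContinuousOnInterval.mul hF).integral_deriv_eq_sub
  simp only [Pi.mul_apply, F, intervalIntegral.integral_same, add_zero] at hftc
  rw [← sub_eq_iff_eq_add', ← hftc]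
  refine intervalIntegral.integral_congr_ae ?_
  filter_upwards [hg.ae_hasDerivAt_integral] with s hs hsI
  have hFs := (hs (uIoc_subset_uIcc hsI) b left_mem_uIcc).const_add c
  exact ((hφ.differentiable one_ne_zero s).hasDerivAt.mul hFs).deriv

theorem exp_mul_eq_add_integral {f x g : ℝ → ℝ} {a x₀ T : ℝ} (hT : 0 ≤ T)
    (hf : IntervalIntegrable f volume 0 T) (hx : ∀ t ∈ Icc 0 T, x t = x₀ + ∫ s in 0..t, f s)
    (hg : ∀ t ∈ Icc 0 T, g t = Real.exp (-a * t) * (f t - a * x t)) :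
    IntervalIntegrable g volume 0 T ∧
      ∀ t ∈ Icc 0 T, Real.exp (-a * t) * x t = x₀ + ∫ s in 0..t, g s := by
  have hexp : ContDiff ℝ 1 fun s ↦ Real.exp (-a * s) := by fun_prop
  have hderiv (s : ℝ) : deriv (fun s ↦ Real.exp (-a * s)) s = -a * Real.exp (-a * s) := by
    simpa [mul_comm] using (((hasDerivAt_id s).const_mul (-a)).exp).deriv
  have hg_eq : EqOn (fun s ↦ Real.exp (-a * s) * (f s - a * (x₀ + ∫ u in 0..s, f u))) g
      (Icc 0 T) := fun s hs ↦ by rw [hg s hs, hx s hs]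
  constructor
  · refine (intervalIntegrable_congr (hg_eq.mono (uIoc_of_le hT ▸ Ioc_subset_Icc_self))).mp ?_
    exact (hf.sub (continuousOn_const.mul (continuousOn_const.add
      (intervalIntegral.continuousOn_primitive_interval' hf left_mem_uIcc))).intervalIntegrable
      ).continuousOn_mul hexp.continuous.continuousOn
  · intro t ht
    have hft : IntervalIntegrable f volume 0 t :=
      hf.mono_set (uIcc_subset_uIcc left_mem_uIcc (uIcc_of_le hT ▸ ht))
    rw [hx t ht, mul_const_add_integral_eq x₀ hexp hft]
    simp only [mul_zero, Real.exp_zero, one_mul, hderiv]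
    congr 1
    refine intervalIntegral.integral_congr fun s hs ↦ ?_
    rw [uIcc_of_le ht.1] at hs
    rw [← hg_eq ⟨hs.1, hs.2.trans ht.2⟩]
    ring

theorem conj_add_smul_one_mul_add {ι R : Type*} [Fintype ι] [DecidableEq ι] [CommRing R]
    {U : Matrix ι ι R} (hU : U * Uᵀ = 1) (D S : Matrix ι ι R) (α : R) :
    U * (D + α • 1) * Uᵀ * S + S * (U * (D + α • 1) * Uᵀ) =
      U * D * Uᵀ * S + S * (U * D * Uᵀ) + (2 * α) • S := by
  have hconj : U * (D + α • 1) * Uᵀ = U * D * Uᵀ + α • 1 := by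
    rw [Matrix.mul_add, Matrix.add_mul, Matrix.mul_smul, Matrix.smul_mul, Matrix.mul_one, hU]
  rw [hconj, two_mul, add_smul]
  simp only [Matrix.add_mul, Matrix.mul_add, Matrix.smul_mul, Matrix.mul_smul, Matrix.one_mul,
    Matrix.mul_one]
  abel

theorem IsReachable.exp_smul_of_add_smul_one {n : ℕ} {P₀ P D : Matrix (Fin n) (Fin n) ℝ} {T : ℝ}
    (α : ℝ) (hT : 0 ≤ T) (h : IsReachable P₀ P (D + α • 1) T) :
    IsReachable P₀ (Real.exp (-(2 * T * α)) • P) D T := by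
  obtain ⟨U, S, hUm, hUo, hSpos, hS0, hST, hInt, hEq⟩ := h
  set e : ℝ → ℝ := fun t ↦ Real.exp (-(2 * α) * t)
  have hgauge (i j : Fin n) :=
    exp_mul_eq_add_integral (a := 2 * α) (x := fun t ↦ S t i j)
      (g := fun t ↦ (U t * D * (U t)ᵀ * (e t • S t) + e t • S t * (U t * D * (U t)ᵀ)) i j)
      hT (hInt i j) (fun t ht ↦ hEq t ht i j) fun t ht ↦ by
        rw [conj_add_smul_one_mul_add (hUo t ht)]
        simp only [Matrix.add_apply, Matrix.smul_apply, Matrix.mul_smul, Matrix.smul_mul,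
          smul_eq_mul]
        ring
  refine ⟨U, fun t ↦ e t • S t, hUm, hUo, fun t ht ↦ (hSpos t ht).smul (Real.exp_pos _),
    by simp [e, hS0], by simp only [e, hST]; ring_nf, fun i j ↦ (hgauge i j).1,
    fun t ht i j ↦ (hgauge i j).2 t ht⟩

theorem isReachable_add_smul_one_iff_smul_general
    {n : ℕ} (T α : ℝ) (hT : 0 < T)
    (D P₀ P : Matrix (Fin n) (Fin n) ℝ) :
    IsReachable P₀ P (D + α • (1 : Matrix (Fin n) (Fin n) ℝ)) T ↔
      IsReachable P₀ (Real.exp (-(2 * T * α)) • P) D T := by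
  refine ⟨IsReachable.exp_smul_of_add_smul_one α hT.le, fun h ↦ ?_⟩
  rw [show D = D + α • 1 + (-α) • 1 by rw [neg_smul, add_neg_cancel_right]] at h
  simpa [smul_smul, ← Real.exp_add] using h.exp_smul_of_add_smul_one (-α) hT.le

/-- Remark 2, isotropic scaling of the reachable set.
`Σ ∈ R(Σ₀, D + αI, T)` if and only if `e^{−2Tα}·Σ ∈ R(Σ₀, D, T)`, i.e.
`R(Σ₀, D, T) = e^{−2Tα}·R(Σ₀, D + αI, T)`. -/
theorem isReachable_add_smul_one_iff_smul
    {n : ℕ} (hn : 1 ≤ n) (T α : ℝ) (hT : 0 < T)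
    (D P₀ P : Matrix (Fin n) (Fin n) ℝ) (hD : D.IsDiag)
    (hP₀ : P₀.PosDef) (hP : P.PosDef) :
    IsReachable P₀ P (D + α • (1 : Matrix (Fin n) (Fin n) ℝ)) T ↔
      IsReachable P₀ (Real.exp (-(2 * T * α)) • P) D T :=
  isReachable_add_smul_one_iff_smul_general T α hT D P₀ P
end

section
/- Let A be a real n×n matrix and 1 ≤ k ≤ n. Then for every t ∈ ℝ, the multiplicative compound of the matrix exponential equals the exponential of the additive compound: ∧ᵏ(exp(tA)) = exp(t·A^[k]). -/
open MeasureTheory Matrix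

/-- The `k`-th multiplicative compound of `X`: the matrix indexed by the
`k`-element subsets of `{1,…,n}` whose `(I,J)` entry is the `k×k` minor of `X`
with rows `I` and columns `J`. -/
noncomputable def mulCompound {n : ℕ} (k : ℕ) (X : Matrix (Fin n) (Fin n) ℝ) :
    Matrix {s : Finset (Fin n) // s.card = k} {s : Finset (Fin n) // s.card = k} ℝ :=
  fun I J =>
    (X.submatrix (fun a : Fin k => (I.1.orderIsoOfFin I.2 a : Fin n))
      (fun a : Fin k => (J.1.orderIsoOfFin J.2 a : Fin n))).det

/-- The `k`-th additive compound of `A`: the entrywise derivative at `t = 0`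
of `t ↦ ∧ᵏ(I + tA)`. -/
noncomputable def addCompound {n : ℕ} (k : ℕ) (A : Matrix (Fin n) (Fin n) ℝ) :
    Matrix {s : Finset (Fin n) // s.card = k} {s : Finset (Fin n) // s.card = k} ℝ :=
  fun I J =>
    deriv (fun t : ℝ => mulCompound k ((1 : Matrix (Fin n) (Fin n) ℝ) + t • A) I J) 0

/-- The singular values of a real square matrix `M`: the square roots of the
eigenvalues of `MᵀM` (as an unordered family). -/
noncomputable def singularValues {m : Type*} [Fintype m] [DecidableEq m]
    (M : Matrix m m ℝ) : m → ℝ :=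
  fun i => Real.sqrt ((show (Mᵀ * M).IsHermitian by
    simpa [Matrix.conjTranspose_eq_transpose_of_trivial] using
      Matrix.isHermitian_conjTranspose_mul_self M).eigenvalues i)

/-- The operator (spectral) norm of a real square matrix, i.e. the norm of the
induced linear operator on Euclidean space. -/
noncomputable def opNorm {m : Type*} [Fintype m] [DecidableEq m]
    (M : Matrix m m ℝ) : ℝ :=
  ‖(Matrix.toEuclideanCLM (𝕜 := ℝ) M : EuclideanSpace ℝ m →L[ℝ] EuclideanSpace ℝ m)‖

/-!
`∧ᵏX` is the matrix of the `k`-th exterior power of `X` in the basis of wedges of standard basis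
vectors, so `∧ᵏ` is multiplicative and `F t := ∧ᵏ(exp (t • A))` is a one-parameter group of
matrices. Such a group satisfies `F' t = F' 0 * F t`, hence `s ↦ exp ((t - s) • F' 0) * F s` is
constant and `F t = exp (t • F' 0)`. Finally, every minor is a differentiable function of the
matrix, so its derivative along a curve through `1` with velocity `A` does not depend on the curve:
along `exp (s • A)` it is the same as along `1 + s • A`, which is how `A^[k]` is defined.
-/

section OneParameterGroup

open NormedSpace

variable {𝔸 : Type*} [NormedRing 𝔸] [NormedAlgebra ℝ 𝔸] {F : ℝ → 𝔸} {C : 𝔸}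

theorem hasDerivAt_of_map_add_eq_mul (hadd : ∀ s t, F (s + t) = F s * F t)
    (hC : HasDerivAt F C 0) (t : ℝ) : HasDerivAt F (C * F t) t := by
  have hshift : (fun s => F (s - t) * F t) = F := funext fun s => by rw [← hadd, sub_add_cancel]
  have h := (HasDerivAt.comp_sub_const t t (by rwa [sub_self])).mul_const (F t)
  rwa [hshift] at h

variable [CompleteSpace 𝔸]

theorem eq_exp_smul_mul_of_hasDerivAt (hF : ∀ t, HasDerivAt F (C * F t) t) (t : ℝ) :
    F t = exp (t • C) * F 0 := by
  have hderiv (s : ℝ) : HasDerivAt (fun s => exp ((t - s) • C) * F s) 0 s := by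
    convert ((hasDerivAt_exp_smul_const' C (t - s)).comp_const_sub t s).fun_mul (hF s) using 1
    rw [((Commute.refl C).smul_right (t - s)).exp_right.eq, neg_mul, mul_assoc, neg_add_cancel]
  simpa using is_const_of_deriv_eq_zero (fun s => (hderiv s).differentiableAt)
    (fun s => (hderiv s).deriv) t 0

theorem eq_exp_smul_of_map_add_eq_mul (hadd : ∀ s t, F (s + t) = F s * F t) (h0 : F 0 = 1)
    (hC : HasDerivAt F C 0) (t : ℝ) : F t = exp (t • C) := by
  rw [eq_exp_smul_mul_of_hasDerivAt (hasDerivAt_of_map_add_eq_mul hadd hC) t, h0, mul_one]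

end OneParameterGroup

section MatrixCalculus

variable {ι κ : Type*}

theorem Matrix.hasDerivAt_iff [Fintype κ] {F : ℝ → Matrix ι κ ℝ} {F' : Matrix ι κ ℝ} {t : ℝ} :
    HasDerivAt F F' t ↔ ∀ i j, HasDerivAt (fun s => F s i j) (F' i j) t :=
  hasDerivAt_pi.trans (forall_congr' fun _ => hasDerivAt_pi)

theorem Matrix.differentiable_det_submatrix [Fintype ι] [Fintype κ] {m : Type*} [Fintype m]
    [DecidableEq m] (r : m → ι) (c : m → κ) :
    Differentiable ℝ fun X : Matrix ι κ ℝ => (X.submatrix r c).det := by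
  -- Derivatives only depend on the product topology; any norm inducing it gives access to the
  -- normed calculus API.
  let _ : NormedAddCommGroup (Matrix ι κ ℝ) := Matrix.normedAddCommGroup
  let _ : NormedSpace ℝ (Matrix ι κ ℝ) := Matrix.normedSpace
  have entry (i : ι) (j : κ) : Differentiable ℝ fun X : Matrix ι κ ℝ => X i j :=
    (LinearMap.toContinuousLinearMap (entryLinearMap ℝ ℝ i j)).differentiable
  simp only [det_apply', submatrix_apply]
  fun_prop

theorem Matrix.hasDerivAt_exp_smul_const [Fintype ι] [DecidableEq ι] (A : Matrix ι ι ℝ) (t : ℝ) :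
    HasDerivAt (fun u : ℝ => NormedSpace.exp (u • A)) (A * NormedSpace.exp (t • A)) t := by
  let _ : NormedRing (Matrix ι ι ℝ) := Matrix.linftyOpNormedRing
  let _ : NormedAlgebra ℝ (Matrix ι ι ℝ) := Matrix.linftyOpNormedAlgebra
  exact hasDerivAt_exp_smul_const' A t

end MatrixCalculus

def cardEqEquivPowersetCard (α : Type*) (k : ℕ) :
    {s : Finset α // s.card = k} ≃ Set.powersetCard α k :=
  Equiv.refl _

section Compound

open exteriorPower

variable {n k : ℕ}

theorem mulCompound_eq_submatrix_toMatrix_map (X : Matrix (Fin n) (Fin n) ℝ) :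
    mulCompound k X = (LinearMap.toMatrix ((Pi.basisFun ℝ (Fin n)).exteriorPower k)
      ((Pi.basisFun ℝ (Fin n)).exteriorPower k) (map k (toLin' X))).submatrix
        (cardEqEquivPowersetCard _ k) (cardEqEquivPowersetCard _ k) := by
  ext I J
  rw [submatrix_apply, LinearMap.toMatrix_apply, basis_apply, map_apply_ιMulti_family,
    basis_repr_apply]
  simp only [ιMulti_family, ιMultiDual_apply_ιMulti, Function.comp_apply, Pi.basisFun_apply,
    toLin'_apply, mulVec_single_one, Module.Basis.coord_apply, Pi.basisFun_repr, col_apply]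
  exact det_transpose _

theorem mulCompound_mul (X Y : Matrix (Fin n) (Fin n) ℝ) :
    mulCompound k (X * Y) = mulCompound k X * mulCompound k Y := by
  simp only [mulCompound_eq_submatrix_toMatrix_map, toLin'_mul, exteriorPower.map_comp,
    LinearMap.toMatrix_comp _ ((Pi.basisFun ℝ (Fin n)).exteriorPower k), submatrix_mul_equiv]

theorem mulCompound_one : mulCompound k (1 : Matrix (Fin n) (Fin n) ℝ) = 1 := by
  simp only [mulCompound_eq_submatrix_toMatrix_map, toLin'_one, exteriorPower.map_id,
    LinearMap.toMatrix_id, submatrix_one_equiv]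

theorem hasDerivAt_mulCompound_apply_comp {γ : ℝ → Matrix (Fin n) (Fin n) ℝ}
    {A : Matrix (Fin n) (Fin n) ℝ} (hγ : HasDerivAt γ A 0) (hγ0 : γ 0 = 1)
    (I J : {s : Finset (Fin n) // s.card = k}) :
    HasDerivAt (fun s => mulCompound k (γ s) I J)
      (fderiv ℝ (fun X => mulCompound k X I J) 1 A) 0 := by
  let _ : NormedAddCommGroup (Matrix (Fin n) (Fin n) ℝ) := Matrix.normedAddCommGroup
  let _ : NormedSpace ℝ (Matrix (Fin n) (Fin n) ℝ) := Matrix.normedSpace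
  have hminor := differentiable_det_submatrix (m := Fin k)
    (fun a => (I.1.orderIsoOfFin I.2 a : Fin n)) (fun a => (J.1.orderIsoOfFin J.2 a : Fin n)) 1
  rw [← hγ0] at hminor ⊢
  exact hminor.hasFDerivAt.comp_hasDerivAt 0 hγ

theorem addCompound_apply_eq_fderiv (A : Matrix (Fin n) (Fin n) ℝ)
    (I J : {s : Finset (Fin n) // s.card = k}) :
    addCompound k A I J = fderiv ℝ (fun X => mulCompound k X I J) 1 A := by
  let _ : NormedAddCommGroup (Matrix (Fin n) (Fin n) ℝ) := Matrix.normedAddCommGroup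
  let _ : NormedSpace ℝ (Matrix (Fin n) (Fin n) ℝ) := Matrix.normedSpace
  refine (hasDerivAt_mulCompound_apply_comp ?_ (by rw [zero_smul, add_zero]) I J).deriv
  exact (((hasDerivAt_id' 0).smul_const A).const_add 1).congr_deriv (one_smul ℝ A)

theorem hasDerivAt_mulCompound_comp {γ : ℝ → Matrix (Fin n) (Fin n) ℝ}
    {A : Matrix (Fin n) (Fin n) ℝ} (hγ : HasDerivAt γ A 0) (hγ0 : γ 0 = 1) :
    HasDerivAt (fun s => mulCompound k (γ s)) (addCompound k A) 0 :=
  Matrix.hasDerivAt_iff.2 fun I J => by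
    simpa only [addCompound_apply_eq_fderiv] using hasDerivAt_mulCompound_apply_comp hγ hγ0 I J

end Compound

theorem mulCompound_exp_general
    {n k : ℕ}
    (A : Matrix (Fin n) (Fin n) ℝ) (t : ℝ) :
    mulCompound k (NormedSpace.exp (t • A)) =
      NormedSpace.exp (t • addCompound k A) := by
  let _ : NormedRing (Matrix {s : Finset (Fin n) // s.card = k} _ ℝ) := Matrix.linftyOpNormedRing
  let _ : NormedAlgebra ℝ (Matrix {s : Finset (Fin n) // s.card = k} _ ℝ) :=
    Matrix.linftyOpNormedAlgebra
  refine eq_exp_smul_of_map_add_eq_mul (F := fun s => mulCompound k (NormedSpace.exp (s • A)))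
    (fun s u => ?_) ?_ ?_ t
  · rw [add_smul, Matrix.exp_add_of_commute _ _ (((Commute.refl A).smul_left s).smul_right u),
      mulCompound_mul]
  · rw [zero_smul, NormedSpace.exp_zero, mulCompound_one]
  · refine hasDerivAt_mulCompound_comp ?_ (by rw [zero_smul, NormedSpace.exp_zero])
    simpa using Matrix.hasDerivAt_exp_smul_const A 0

/-- exponential relation between the two compounds:
`∧ᵏ(exp(tA)) = exp(t·A^[k])` for all `t ∈ ℝ`. -/
theorem mulCompound_exp
    {n k : ℕ} (hk1 : 1 ≤ k) (hkn : k ≤ n)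
    (A : Matrix (Fin n) (Fin n) ℝ) (t : ℝ) :
    mulCompound k (NormedSpace.exp (t • A)) =
      NormedSpace.exp (t • addCompound k A) :=
  mulCompound_exp_general A t
end

section
/- Let T > 0, let B : [0,T] → ℝ^{n×n} be integrable with B_t symmetric for almost every t, and let Z : [0,T] → ℝ^{n×n} be absolutely continuous with Z'(t) = B_t Z_t for almost every t ∈ [0,T]. Then for all 0 ≤ s ≤ t ≤ T, the operator norm satisfies ‖Z_t‖ ≤ exp(∫ₛᵗ λ_max(B_τ) dτ) · ‖Z_s‖, where λ_max(B) denotes the largest eigenvalue of the symmetric matrix B. -/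
open MeasureTheory Matrix

/-- The largest eigenvalue of a real symmetric matrix (junk value `0` if the
matrix is not symmetric). -/
noncomputable def lambdaMax {n : ℕ} (B : Matrix (Fin n) (Fin n) ℝ) : ℝ :=
  if h : B.IsHermitian then ⨆ i, h.eigenvalues i else 0

/-! Fix a vector `v`. Where `B τ` is symmetric, the derivative of `‖Z τ v‖²` is
`2 ⟪Z τ v, B τ Z τ v⟫ ≤ 2 λ_max(B τ) ‖Z τ v‖²`, so Grönwall's inequality, proved for absolutely
continuous functions by showing that `‖Z τ v‖² · exp(-2 ∫ₛ^τ λ_max)` has an a.e. nonpositive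
derivative, gives `‖Z t v‖ ≤ exp(∫ₛᵗ λ_max) ‖Z s v‖`; taking the supremum over unit `v` bounds
the operator norm. Integrability of `τ ↦ λ_max(B τ)` comes from writing `λ_max(B)` as the maximum
of `⟪x, B x⟫` over the unit sphere, a continuous function of `B` bounded by `‖B‖`. -/

open Set Filter Metric RealInnerProductSpace

namespace AbsolutelyContinuousOnInterval

theorem congr {X : Type*} [PseudoMetricSpace X] {f g : ℝ → X} {a b : ℝ}
    (hf : AbsolutelyContinuousOnInterval f a b) (hfg : EqOn f g (uIcc a b)) :
    AbsolutelyContinuousOnInterval g a b := by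
  refine hf.congr' (eventually_inf_principal.2 (Eventually.of_forall ?_))
  rintro ⟨k, I⟩ hI
  exact Finset.sum_congr rfl fun i hi => by rw [hfg (hI.1 i hi).1, hfg (hI.1 i hi).2]

theorem const {X : Type*} [PseudoMetricSpace X] (c : X) (a b : ℝ) :
    AbsolutelyContinuousOnInterval (fun _ => c) a b :=
  (LipschitzWith.const c).lipschitzOnWith.absolutelyContinuousOnInterval

theorem sum {F ι : Type*} [SeminormedAddCommGroup F] {a b : ℝ} (s : Finset ι) {f : ι → ℝ → F}
    (hf : ∀ i ∈ s, AbsolutelyContinuousOnInterval (f i) a b) :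
    AbsolutelyContinuousOnInterval (fun x => ∑ i ∈ s, f i x) a b := by
  classical
  induction s using Finset.induction_on with
  | empty => simpa using const (0 : F) a b
  | insert i s hi ih =>
    simp only [Finset.sum_insert hi]
    exact (hf i (s.mem_insert_self i)).fun_add (ih fun j hj => hf j (Finset.mem_insert_of_mem hj))

theorem dotProduct {ι : Type*} [Fintype ι] {x y : ℝ → ι → ℝ} {a b : ℝ}
    (hx : ∀ i, AbsolutelyContinuousOnInterval (fun τ => x τ i) a b)
    (hy : ∀ i, AbsolutelyContinuousOnInterval (fun τ => y τ i) a b) :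
    AbsolutelyContinuousOnInterval (fun τ => x τ ⬝ᵥ y τ) a b :=
  sum _ fun i _ => (hx i).fun_mul (hy i)

end AbsolutelyContinuousOnInterval

theorem LipschitzOnWith.comp_absolutelyContinuousOnInterval {X Y : Type*} [PseudoMetricSpace X]
    [PseudoMetricSpace Y] {φ : X → Y} {f : ℝ → X} {K : NNReal} {s : Set X} {a b : ℝ}
    (hφ : LipschitzOnWith K φ s) (hf : AbsolutelyContinuousOnInterval f a b)
    (hfs : MapsTo f (uIcc a b) s) :
    AbsolutelyContinuousOnInterval (φ ∘ f) a b := by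
  refine squeeze_zero' (Eventually.of_forall fun _ => Finset.sum_nonneg fun _ _ => dist_nonneg)
    ?_ (by simpa using Tendsto.const_mul (K : ℝ) hf)
  rw [eventually_inf_principal]
  filter_upwards with ⟨k, I⟩ hI
  rw [Finset.mul_sum]
  exact Finset.sum_le_sum fun i hi =>
    hφ.dist_le_mul _ (hfs (hI.1 i hi).1) _ (hfs (hI.1 i hi).2)

theorem ContDiff.comp_absolutelyContinuousOnInterval {φ f : ℝ → ℝ} {a b : ℝ}
    (hφ : ContDiff ℝ 1 φ) (hf : AbsolutelyContinuousOnInterval f a b) :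
    AbsolutelyContinuousOnInterval (φ ∘ f) a b := by
  obtain ⟨C, hC⟩ := hf.exists_bound
  obtain ⟨K, hK⟩ := hφ.contDiffOn.exists_lipschitzOnWith (s := Icc (-C) C) (by decide)
    (convex_Icc _ _) isCompact_Icc
  exact hK.comp_absolutelyContinuousOnInterval hf fun x hx => abs_le.1 (hC x hx)

theorem absolutelyContinuousOnInterval_of_eq_integral {f g : ℝ → ℝ} {a b : ℝ}
    (hg : IntervalIntegrable g volume a b) (hf : ∀ x ∈ uIcc a b, f x = f a + ∫ t in a..x, g t) :
    AbsolutelyContinuousOnInterval f a b :=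
  ((AbsolutelyContinuousOnInterval.const (f a) a b).fun_add
    (hg.absolutelyContinuousOnInterval_intervalIntegral left_mem_uIcc)).congr
    fun x hx => (hf x hx).symm

theorem ae_hasDerivAt_of_eq_integral {f g : ℝ → ℝ} {a b : ℝ}
    (hg : IntervalIntegrable g volume a b) (hf : ∀ x ∈ uIcc a b, f x = f a + ∫ t in a..x, g t) :
    ∀ᵐ x, x ∈ Ioo a b → HasDerivAt f (g x) x := by
  filter_upwards [hg.ae_hasDerivAt_integral] with x hx hxab
  have hsub : Ioo a b ⊆ uIcc a b := Ioo_subset_Icc_self.trans Icc_subset_uIcc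
  refine ((hx (hsub hxab) a left_mem_uIcc).const_add (f a)).congr_of_eventuallyEq ?_
  filter_upwards [Ioo_mem_nhds hxab.1 hxab.2] with y hy using hf y (hsub hy)

theorem HasDerivAt.dotProduct {ι : Type*} [Fintype ι] {x y : ℝ → ι → ℝ} {x' y' : ι → ℝ} {τ : ℝ}
    (hx : HasDerivAt x x' τ) (hy : HasDerivAt y y' τ) :
    HasDerivAt (fun σ => x σ ⬝ᵥ y σ) (x' ⬝ᵥ y τ + x τ ⬝ᵥ y') τ :=
  (HasDerivAt.fun_sum (u := Finset.univ) fun i _ =>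
    (hasDerivAt_pi.1 hx i).mul (hasDerivAt_pi.1 hy i)).congr_deriv Finset.sum_add_distrib

theorem AbsolutelyContinuousOnInterval.le_mul_exp_integral_of_ae_deriv_le {f c : ℝ → ℝ}
    {a b : ℝ} (hab : a ≤ b) (hf : AbsolutelyContinuousOnInterval f a b)
    (hc : IntervalIntegrable c volume a b)
    (hfc : ∀ᵐ x, x ∈ Ioo a b → deriv f x ≤ c x * f x) :
    f b ≤ f a * Real.exp (∫ x in a..b, c x) := by
  set C : ℝ → ℝ := fun x => ∫ t in a..x, c t
  set g : ℝ → ℝ := fun x => Real.exp (-C x)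
  have hg : AbsolutelyContinuousOnInterval g a b :=
    Real.contDiff_exp.comp_absolutelyContinuousOnInterval
      (hc.absolutelyContinuousOnInterval_intervalIntegral left_mem_uIcc).fun_neg
  have hg' : ∀ᵐ x, x ∈ Ioo a b → deriv g x = -c x * g x := by
    filter_upwards [hc.ae_hasDerivAt_integral] with x hx hxab
    have hxab' : x ∈ uIcc a b := by rw [uIcc_of_le hab]; exact Ioo_subset_Icc_self hxab
    exact ((hx hxab' a left_mem_uIcc).neg.exp).deriv.trans (mul_comm _ _)
  have hparts := hf.integral_deriv_mul_eq_sub hg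
  have hnonpos : ∫ x in a..b, deriv f x * g x + f x * deriv g x ≤ 0 := by
    refine neg_nonneg.1 (?_ : 0 ≤ -∫ x in a..b, deriv f x * g x + f x * deriv g x)
    rw [← intervalIntegral.integral_neg]
    refine intervalIntegral.integral_nonneg_of_ae_restrict hab ?_
    rw [← Measure.restrict_congr_set Ioo_ae_eq_Icc]
    filter_upwards [(ae_restrict_iff' measurableSet_Ioo).2 hfc,
      (ae_restrict_iff' measurableSet_Ioo).2 hg'] with x hfx hgx
    rw [Pi.zero_apply, hgx]
    nlinarith [Real.exp_pos (-C x)]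
  have hgb : g b * Real.exp (C b) = 1 := by rw [← Real.exp_add, neg_add_cancel, Real.exp_zero]
  have hga : g a = 1 := by simp [g, C]
  calc f b = f b * g b * Real.exp (C b) := by rw [mul_assoc, hgb, mul_one]
    _ ≤ f a * g a * Real.exp (C b) := mul_le_mul_of_nonneg_right (by linarith) (Real.exp_pos _).le
    _ = f a * Real.exp (∫ x in a..b, c x) := by rw [hga, mul_one]

namespace ContinuousLinearMap

variable {E : Type*} [NormedAddCommGroup E] [InnerProductSpace ℝ E]

noncomputable def rayleighSup (T : E →L[ℝ] E) : ℝ :=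
  sSup ((fun x => ⟪x, T x⟫) '' sphere 0 1)

theorem abs_inner_apply_le_of_mem_sphere (T : E →L[ℝ] E) {x : E} (hx : x ∈ sphere (0 : E) 1) :
    |⟪x, T x⟫| ≤ ‖T‖ := by
  rw [mem_sphere_zero_iff_norm] at hx
  calc |⟪x, T x⟫| ≤ ‖x‖ * ‖T x‖ := abs_real_inner_le_norm _ _
    _ ≤ ‖x‖ * (‖T‖ * ‖x‖) := by gcongr; exact T.le_opNorm x
    _ = ‖T‖ := by rw [hx]; ring

theorem abs_rayleighSup_le (T : E →L[ℝ] E) : |T.rayleighSup| ≤ ‖T‖ := by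
  rcases ((fun x => ⟪x, T x⟫) '' sphere (0 : E) 1).eq_empty_or_nonempty with h | h
  · simp [rayleighSup, h]
  have hle : ∀ y ∈ sphere (0 : E) 1, ⟪y, T y⟫ ≤ ‖T‖ := fun y hy =>
    (abs_le.1 (T.abs_inner_apply_le_of_mem_sphere hy)).2
  obtain ⟨_, ⟨x, hx, rfl⟩⟩ := h
  refine abs_le.2 ⟨?_, csSup_le ⟨_, x, hx, rfl⟩ (forall_mem_image.2 hle)⟩
  exact (abs_le.1 (T.abs_inner_apply_le_of_mem_sphere hx)).1.trans
    (le_csSup ⟨_, forall_mem_image.2 hle⟩ ⟨x, hx, rfl⟩)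

theorem continuous_rayleighSup [ProperSpace E] : Continuous (rayleighSup (E := E)) :=
  (isCompact_sphere 0 1).continuous_sSup (f := fun (T : E →L[ℝ] E) (x : E) => ⟪x, T x⟫)
    (continuous_snd.inner (continuous_fst.clm_apply continuous_snd))

end ContinuousLinearMap

section lambdaMax

variable {n : ℕ} {B : Matrix (Fin n) (Fin n) ℝ}

theorem lambdaMax_of_isHermitian (hB : B.IsHermitian) :
    lambdaMax B = ⨆ i, hB.eigenvalues i :=
  dif_pos hB

theorem inner_toEuclideanCLM_le_lambdaMax (hB : B.IsHermitian) (x : EuclideanSpace ℝ (Fin n)) :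
    ⟪x, toEuclideanCLM (𝕜 := ℝ) B x⟫ ≤ lambdaMax B * ‖x‖ ^ 2 := by
  set b := hB.eigenvectorBasis
  have hb : ∀ i, ⟪b i, toEuclideanCLM (𝕜 := ℝ) B x⟫ = hB.eigenvalues i * ⟪b i, x⟫ := by
    intro i
    change ⟪b i, toEuclideanLin B x⟫ = _
    rw [← isSymmetric_toEuclideanLin_iff.mpr hB (b i) x]
    change ⟪WithLp.toLp 2 (B *ᵥ b i), x⟫ = _
    rw [hB.mulVec_eigenvectorBasis i]
    exact real_inner_smul_left _ _ _
  rw [← real_inner_self_eq_norm_sq, ← b.sum_inner_mul_inner x, ← b.sum_inner_mul_inner x,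
    Finset.mul_sum]
  refine Finset.sum_le_sum fun i _ => ?_
  rw [hb, lambdaMax_of_isHermitian hB, mul_left_comm, real_inner_comm x (b i)]
  exact mul_le_mul_of_nonneg_right (le_ciSup (finite_range _).bddAbove i) (mul_self_nonneg _)

theorem dotProduct_mulVec_le_lambdaMax_mul (hB : B.IsHermitian) (x : Fin n → ℝ) :
    x ⬝ᵥ B *ᵥ x ≤ lambdaMax B * (x ⬝ᵥ x) := by
  have h := inner_toEuclideanCLM_le_lambdaMax hB (WithLp.toLp 2 x)
  rwa [inner_toEuclideanCLM, ← real_inner_self_eq_norm_sq] at h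

theorem inner_toEuclideanCLM_eigenvectorBasis (hB : B.IsHermitian) (i : Fin n) :
    ⟪hB.eigenvectorBasis i, toEuclideanCLM (𝕜 := ℝ) B (hB.eigenvectorBasis i)⟫ =
      hB.eigenvalues i := by
  change ⟪hB.eigenvectorBasis i, WithLp.toLp 2 (B *ᵥ hB.eigenvectorBasis i)⟫ = _
  rw [hB.mulVec_eigenvectorBasis i]
  change ⟪_, hB.eigenvalues i • hB.eigenvectorBasis i⟫ = _
  rw [real_inner_smul_right, real_inner_self_eq_norm_sq, hB.eigenvectorBasis.norm_eq_one,
    one_pow, mul_one]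

theorem lambdaMax_eq_rayleighSup (hB : B.IsHermitian) :
    lambdaMax B = (toEuclideanCLM (𝕜 := ℝ) B).rayleighSup := by
  rw [lambdaMax_of_isHermitian hB]
  rcases isEmpty_or_nonempty (Fin n) with hn | hn
  · have : sphere (0 : EuclideanSpace ℝ (Fin n)) 1 = ∅ :=
      sphere_eq_empty_of_subsingleton one_ne_zero
    simp [ContinuousLinearMap.rayleighSup, this]
  have hsphere : ∀ x ∈ sphere (0 : EuclideanSpace ℝ (Fin n)) 1,
      ⟪x, toEuclideanCLM (𝕜 := ℝ) B x⟫ ≤ ⨆ i, hB.eigenvalues i := fun x hx => by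
    simpa [← lambdaMax_of_isHermitian hB, mem_sphere_zero_iff_norm.1 hx] using
      inner_toEuclideanCLM_le_lambdaMax hB x
  have hmem : ∀ i, hB.eigenvectorBasis i ∈ sphere (0 : EuclideanSpace ℝ (Fin n)) 1 := fun i =>
    mem_sphere_zero_iff_norm.2 (hB.eigenvectorBasis.norm_eq_one i)
  refine le_antisymm (ciSup_le fun i => ?_)
    (csSup_le ⟨_, _, hmem hn.some, rfl⟩ (forall_mem_image.2 hsphere))
  rw [← inner_toEuclideanCLM_eigenvectorBasis hB i]
  exact le_csSup ⟨_, forall_mem_image.2 hsphere⟩ ⟨_, hmem i, rfl⟩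

end lambdaMax

section Integrable

variable {α : Type*} [MeasurableSpace α] {μ : Measure α}

theorem integrable_toEuclideanCLM {m : Type*} [Fintype m] [DecidableEq m]
    {M : α → Matrix m m ℝ} (hM : ∀ i j, Integrable (fun a => M a i j) μ) :
    Integrable (fun a => toEuclideanCLM (𝕜 := ℝ) (M a)) μ := by
  set e : m → m → EuclideanSpace ℝ m →L[ℝ] EuclideanSpace ℝ m :=
    fun i j => toEuclideanCLM (𝕜 := ℝ) (single i j 1)
  have : (fun a => toEuclideanCLM (𝕜 := ℝ) (M a)) = fun a => ∑ i, ∑ j, M a i j • e i j := by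
    ext1 a
    conv_lhs => rw [matrix_eq_sum_single (M a)]
    simp only [map_sum]
    refine Finset.sum_congr rfl fun i _ => Finset.sum_congr rfl fun j _ => ?_
    rw [← map_smul (toEuclideanCLM (n := m) (𝕜 := ℝ)), smul_single, smul_eq_mul, mul_one]
  rw [this]
  exact integrable_finsetSum (f := fun i a => ∑ j, M a i j • e i j) _ fun i _ =>
    integrable_finsetSum (f := fun j a => M a i j • e i j) _ fun j _ => (hM i j).smul_const _

theorem integrable_lambdaMax {n : ℕ} {B : α → Matrix (Fin n) (Fin n) ℝ}
    (hB : ∀ i j, Integrable (fun a => B a i j) μ) (hsym : ∀ᵐ a ∂μ, (B a).IsHermitian) :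
    Integrable (fun a => lambdaMax (B a)) μ := by
  have hT := integrable_toEuclideanCLM hB
  refine (hT.norm.mono
    (ContinuousLinearMap.continuous_rayleighSup.comp_aestronglyMeasurable hT.1)
    (Eventually.of_forall fun a => ?_)).congr ?_
  · simpa using ContinuousLinearMap.abs_rayleighSup_le _
  · filter_upwards [hsym] with a ha
    exact (lambdaMax_eq_rayleighSup ha).symm

end Integrable

theorem dotProduct_mulVec_le_mul_exp_integral_lambdaMax {n : ℕ}
    {B Z : ℝ → Matrix (Fin n) (Fin n) ℝ} {s t : ℝ} (hst : s ≤ t)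
    (hZ : ∀ i j, AbsolutelyContinuousOnInterval (fun τ => Z τ i j) s t)
    (hZ' : ∀ i j, ∀ᵐ τ, τ ∈ Ioo s t → HasDerivAt (fun σ => Z σ i j) ((B τ * Z τ) i j) τ)
    (hB : ∀ᵐ τ, τ ∈ Ioo s t → (B τ).IsHermitian)
    (hΛ : IntervalIntegrable (fun τ => lambdaMax (B τ)) volume s t) (v : Fin n → ℝ) :
    Z t *ᵥ v ⬝ᵥ Z t *ᵥ v ≤ Z s *ᵥ v ⬝ᵥ Z s *ᵥ v * Real.exp (2 * ∫ τ in s..t, lambdaMax (B τ)) := by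
  rw [← intervalIntegral.integral_const_mul]
  have hx : ∀ i, AbsolutelyContinuousOnInterval (fun τ => (Z τ *ᵥ v) i) s t := fun i =>
    .dotProduct (hZ i) fun j => .const (v j) s t
  refine (AbsolutelyContinuousOnInterval.dotProduct hx hx).le_mul_exp_integral_of_ae_deriv_le hst
    (hΛ.const_mul 2) ?_
  filter_upwards [eventually_all.2 fun i => eventually_all.2 (hZ' i), hB] with τ hZτ hBτ hτ
  have hxτ : HasDerivAt (fun σ => Z σ *ᵥ v) (B τ *ᵥ Z τ *ᵥ v) τ := by
    rw [mulVec_mulVec]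
    refine hasDerivAt_pi.2 fun i => ?_
    exact ((hasDerivAt_pi.2 fun j => hZτ i j hτ).dotProduct (hasDerivAt_const τ v)).congr_deriv
      (by rw [dotProduct_zero, add_zero]; rfl)
  rw [(hxτ.dotProduct hxτ).deriv, dotProduct_comm (B τ *ᵥ _)]
  linarith [dotProduct_mulVec_le_lambdaMax_mul (hBτ hτ) (Z τ *ᵥ v)]

theorem norm_toEuclideanCLM_sq {m : Type*} [Fintype m] [DecidableEq m] (M : Matrix m m ℝ)
    (x : EuclideanSpace ℝ m) :
    ‖toEuclideanCLM (𝕜 := ℝ) M x‖ ^ 2 = M *ᵥ x ⬝ᵥ M *ᵥ x := by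
  rw [← real_inner_self_eq_norm_sq, inner_toEuclideanCLM, ofLp_toEuclideanCLM]

theorem opNorm_le_mul_opNorm {m : Type*} [Fintype m] [DecidableEq m] {M N : Matrix m m ℝ} {c : ℝ}
    (hc : 0 ≤ c) (h : ∀ x, ‖toEuclideanCLM (𝕜 := ℝ) M x‖ ≤ c * ‖toEuclideanCLM (𝕜 := ℝ) N x‖) :
    opNorm M ≤ c * opNorm N :=
  ContinuousLinearMap.opNorm_le_bound _ (mul_nonneg hc (norm_nonneg _)) fun x =>
    (h x).trans <| by
      rw [mul_assoc]
      exact mul_le_mul_of_nonneg_left (ContinuousLinearMap.le_opNorm _ x) hc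

/-- Lemma 12, operator norm growth. If `Z` is an absolutely
continuous solution of `Z' = B_t Z` a.e. on `[0,T]` (encoded in integral form)
with `B_t` symmetric for a.e. `t`, then for `0 ≤ s ≤ t ≤ T`,
`‖Z_t‖ ≤ exp(∫ₛᵗ λ_max(B_τ) dτ)·‖Z_s‖`. -/
theorem opNorm_growth
    {n : ℕ} (T : ℝ) (hT : 0 < T)
    (B Z : ℝ → Matrix (Fin n) (Fin n) ℝ)
    (hBint : ∀ i j, IntervalIntegrable (fun t => B t i j) MeasureTheory.volume 0 T)
    (hBsym : ∀ᵐ t ∂(MeasureTheory.volume.restrict (Set.Icc (0:ℝ) T)), (B t).IsHermitian)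
    (hprod : ∀ i j,
      IntervalIntegrable (fun t => (B t * Z t) i j) MeasureTheory.volume 0 T)
    (hZ : ∀ t ∈ Set.Icc (0:ℝ) T, ∀ i j,
      Z t i j = Z 0 i j + ∫ τ in (0:ℝ)..t, (B τ * Z τ) i j)
    (s t : ℝ) (hs : 0 ≤ s) (hst : s ≤ t) (ht : t ≤ T) :
    opNorm (Z t) ≤ Real.exp (∫ τ in s..t, lambdaMax (B τ)) * opNorm (Z s) := by
  have hsub : uIcc s t ⊆ uIcc 0 T := by
    rw [uIcc_of_le hst, uIcc_of_le hT.le]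
    exact Icc_subset_Icc hs ht
  have hIoo : Ioo s t ⊆ Ioo 0 T := Ioo_subset_Ioo hs ht
  have hZ₀ : ∀ i j, ∀ x ∈ uIcc 0 T, Z x i j = Z 0 i j + ∫ τ in 0..x, (B τ * Z τ) i j :=
    fun i j x hx => hZ x (by rwa [uIcc_of_le hT.le] at hx) i j
  have hsym : ∀ᵐ τ, τ ∈ Ioo s t → (B τ).IsHermitian :=
    ((ae_restrict_iff' measurableSet_Icc).1 hBsym).mono fun τ h hτ =>
      h (Ioo_subset_Icc_self (hIoo hτ))
  have hΛ : IntervalIntegrable (fun τ => lambdaMax (B τ)) volume s t := by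
    rw [intervalIntegrable_iff_integrableOn_Ioc_of_le hst]
    refine integrable_lambdaMax (fun i j => ((hBint i j).mono_set hsub).1) ?_
    exact ae_restrict_of_ae_restrict_of_subset
      (show Ioc s t ⊆ Icc 0 T from fun τ hτ => ⟨hs.trans hτ.1.le, hτ.2.trans ht⟩) hBsym
  have hgrowth := dotProduct_mulVec_le_mul_exp_integral_lambdaMax hst
    (fun i j => (absolutelyContinuousOnInterval_of_eq_integral (hprod i j) (hZ₀ i j)).mono hsub)
    (fun i j => (ae_hasDerivAt_of_eq_integral (hprod i j) (hZ₀ i j)).mono fun τ h hτ => h (hIoo hτ))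
    hsym hΛ
  refine opNorm_le_mul_opNorm (Real.exp_pos _).le fun x => ?_
  refine (pow_le_pow_iff_left₀ (norm_nonneg _) (by positivity) two_ne_zero).1 ?_
  rw [norm_toEuclideanCLM_sq, mul_pow, norm_toEuclideanCLM_sq, ← Real.exp_nat_mul, mul_comm]
  exact_mod_cast hgrowth x
end
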